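/- Let P be a finite set of points in ℝ² in general position with a triangular convex hull, and let T be a triangulation of P. If p and q are two distinct internal points of P that both have degree 3 in T, then {p,q} is not an edge of T. -/

import Mathlib

open scoped Classical

noncomputable section

/-- `P` is in general position: no three points of `P` are collinear. -/
def GenPos (P : Finset (ℝ × ℝ)) : Prop :=
  ∀ p ∈ P, ∀ q ∈ P, ∀ r ∈ P, p ≠ q → p ≠ r → q ≠ r →
    ¬ Collinear ℝ ({p, q, r} : Set (ℝ × ℝ))

/-- `G` is a plane graph on `P`: edges are drawn as straight segments, and the
open segments of any two distinct edges are disjoint. -/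
def IsPlaneGraph (P : Finset (ℝ × ℝ)) (G : SimpleGraph P) : Prop :=
  ∀ a b c d : P, G.Adj a b → G.Adj c d → s(a, b) ≠ s(c, d) →
    openSegment ℝ (a : ℝ × ℝ) (b : ℝ × ℝ) ∩ openSegment ℝ (c : ℝ × ℝ) (d : ℝ × ℝ) = ∅

/-- The collection `𝒢(P)` of all plane graphs on `P`. -/
def planeGraphs (P : Finset (ℝ × ℝ)) : Finset (SimpleGraph P) :=
  Finset.univ.filter (IsPlaneGraph P)

/-- `pg(P)`, the number of plane graphs on `P`. -/
def pg (P : Finset (ℝ × ℝ)) : ℕ := (planeGraphs P).card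

/-- `v_i(G)`, the number of vertices of degree `i` in `G`. -/
def vcount (P : Finset (ℝ × ℝ)) (G : SimpleGraph P) (i : ℕ) : ℕ :=
  (Finset.univ.filter fun p : P => G.degree p = i).card

/-- `v̂_i(P)`, the expected number of degree-`i` vertices in a uniformly random
plane graph on `P`. -/
def vhat (P : Finset (ℝ × ℝ)) (i : ℕ) : ℝ :=
  (∑ G ∈ planeGraphs P, (vcount P G i : ℝ)) / (pg P : ℝ)

/-- The hull points of `P`: extreme points of the convex hull of `P`. -/
def hullPoints (P : Finset (ℝ × ℝ)) : Set (ℝ × ℝ) :=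
  (convexHull ℝ (P : Set (ℝ × ℝ))).extremePoints ℝ

/-- `P` has a triangular convex hull: exactly three hull points. -/
def TriHull (P : Finset (ℝ × ℝ)) : Prop :=
  (hullPoints P).ncard = 3

/-- `p` is an internal point of `P`. -/
def Internal (P : Finset (ℝ × ℝ)) (p : ℝ × ℝ) : Prop :=
  p ∈ P ∧ p ∉ hullPoints P

/-- The graph obtained from `G` by adding the edge `pq`. -/
def addEdge (P : Finset (ℝ × ℝ)) (G : SimpleGraph P) (p q : P) : SimpleGraph P :=
  G ⊔ SimpleGraph.fromEdgeSet {s(p, q)}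

/-- `q` is visible from `p` in `G`: `pq` is not an edge of `G` and adding it
again yields a plane graph. -/
def Visible (P : Finset (ℝ × ℝ)) (G : SimpleGraph P) (p q : P) : Prop :=
  p ≠ q ∧ ¬ G.Adj p q ∧ IsPlaneGraph P (addEdge P G p q)

/-- The visibility of `p` in `G`: the number of points visible from `p`. -/
def visibility (P : Finset (ℝ × ℝ)) (G : SimpleGraph P) (p : P) : ℕ :=
  (Finset.univ.filter fun q : P => Visible P G p q).card

/-- A triangulation of `P`: a plane graph to which no edge can be added so that
the result is still a plane graph. -/
def IsTriangulation (P : Finset (ℝ × ℝ)) (T : SimpleGraph P) : Prop :=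
  IsPlaneGraph P T ∧
    ∀ p q : P, p ≠ q → ¬ T.Adj p q → ¬ IsPlaneGraph P (addEdge P T p q)

/-- `v_0^△(G)`: the number of isolated internal vertices of `G`. -/
def v0tri (P : Finset (ℝ × ℝ)) (G : SimpleGraph P) : ℕ :=
  (Finset.univ.filter fun p : P => G.degree p = 0 ∧ Internal P (p : ℝ × ℝ)).card

/-- `v̂_0^△(P)`: expected number of isolated internal vertices in a random
plane graph on `P`. -/
def vhat0tri (P : Finset (ℝ × ℝ)) : ℝ :=
  (∑ G ∈ planeGraphs P, (v0tri P G : ℝ)) / (pg P : ℝ)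

/-- `pg^△(n)`: the minimum number of plane graphs over all sets of `n` points
in general position with a triangular convex hull. -/
def pgTri (n : ℕ) : ℕ :=
  sInf {m | ∃ P : Finset (ℝ × ℝ), P.card = n ∧ GenPos P ∧ TriHull P ∧ pg P = m}

/-- cross product of `a - o` and `b - o`. -/
def cr (o a b : ℝ × ℝ) : ℝ := (a.1 - o.1) * (b.2 - o.2) - (a.2 - o.2) * (b.1 - o.1)

lemma cr_cyc (o a b : ℝ × ℝ) : cr o a b = cr a b o := by unfold cr; ring

lemma cr_swap (o a b : ℝ × ℝ) : cr o a b = - cr o b a := by unfold cr; ring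

lemma cr_self₂ (o a : ℝ × ℝ) : cr o a a = 0 := by unfold cr; ring

lemma cr_self₁ (o b : ℝ × ℝ) : cr o o b = 0 := by unfold cr; ring

lemma cr_self₃ (o a : ℝ × ℝ) : cr o a o = 0 := by unfold cr; ring

lemma cr_sum (u v w z : ℝ × ℝ) : cr z v w + cr u z w + cr u v z = cr u v w := by
  unfold cr; ring

/-- affinity of `cr o a ·` along a parametrized segment. -/
lemma cr_param (o a x y : ℝ × ℝ) (t : ℝ) :
    cr o a (x + t • (y - x)) = (1 - t) * cr o a x + t * cr o a y := by
  unfold cr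
  simp [Prod.smul_def, Prod.fst_add, Prod.snd_add, Prod.fst_sub, Prod.snd_sub, smul_eq_mul]
  ring

lemma cr_combo3 (o a x y z : ℝ × ℝ) (α β γ : ℝ) (h : α + β + γ = 1) :
    cr o a (α • x + β • y + γ • z) = α * cr o a x + β * cr o a y + γ * cr o a z := by
  unfold cr
  have hγ : γ = 1 - α - β := by linarith
  subst hγ
  simp [Prod.smul_def, Prod.fst_add, Prod.snd_add, Prod.fst_sub, Prod.snd_sub, smul_eq_mul]
  ring

/-- Barycentric representation. -/
lemma cr_bary {u v w : ℝ × ℝ} (z : ℝ × ℝ) (hD : cr u v w ≠ 0) :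
    z = (cr z v w / cr u v w) • u + (cr u z w / cr u v w) • v + (cr u v z / cr u v w) • w := by
  have h1 : (cr z v w) * u.1 + (cr u z w) * v.1 + (cr u v z) * w.1 = (cr u v w) * z.1 := by
    unfold cr; ring
  have h2 : (cr z v w) * u.2 + (cr u z w) * v.2 + (cr u v z) * w.2 = (cr u v w) * z.2 := by
    unfold cr; ring
  apply Prod.ext
  · simp only [Prod.fst_add, Prod.smul_def, smul_eq_mul]
    field_simp
    linarith [h1]
  · simp only [Prod.snd_add, Prod.smul_def, smul_eq_mul]
    field_simp
    linarith [h2]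

lemma collinear_of_cr_eq_zero {a b c : ℝ × ℝ} (h : cr a b c = 0) :
    Collinear ℝ ({a, b, c} : Set (ℝ × ℝ)) := by
  by_cases hba : b = a
  · rw [hba]
    have hset : ({a, a, c} : Set (ℝ × ℝ)) = {a, c} := by simp
    rw [hset]; exact collinear_pair ℝ a c
  · have hv : b - a ≠ 0 := sub_ne_zero.mpr hba
    rw [collinear_iff_of_mem (Set.mem_insert a {b, c})]
    refine ⟨b - a, fun p hp => ?_⟩
    have hc1 : (b.1 - a.1) * (c.2 - a.2) - (b.2 - a.2) * (c.1 - a.1) = 0 := h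
    rcases hp with rfl | rfl | rfl
    · exact ⟨0, by simp⟩
    · exact ⟨1, by simp⟩
    · rcases eq_or_ne (b.1 - a.1) 0 with h1 | h1
      · have h2 : b.2 - a.2 ≠ 0 := by
          intro h2
          apply hv
          have e1 : b.1 = a.1 := by linarith
          have e2 : b.2 = a.2 := by linarith
          apply Prod.ext <;> simp [e1, e2]
        have hp1 : p.1 - a.1 = 0 := by
          rw [h1] at hc1
          have : (b.2 - a.2) * (p.1 - a.1) = 0 := by linarith
          rcases mul_eq_zero.mp this with h' | h'
          · exact absurd h' h2
          · exact h'
        refine ⟨(p.2 - a.2) / (b.2 - a.2), ?_⟩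
        apply Prod.ext
        · simp only [vadd_eq_add, Prod.fst_add, Prod.smul_fst, Prod.fst_sub, smul_eq_mul]
          rw [h1]; ring_nf; linarith
        · simp only [vadd_eq_add, Prod.snd_add, Prod.smul_snd, Prod.snd_sub, smul_eq_mul]
          field_simp; ring
      · refine ⟨(p.1 - a.1) / (b.1 - a.1), ?_⟩
        apply Prod.ext
        · simp only [vadd_eq_add, Prod.fst_add, Prod.smul_fst, Prod.fst_sub, smul_eq_mul]
          field_simp; ring
        · simp only [vadd_eq_add, Prod.snd_add, Prod.smul_snd, Prod.snd_sub, smul_eq_mul]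
          field_simp
          nlinarith [hc1]

lemma mem_openSegment' {x y z : ℝ × ℝ} :
    z ∈ openSegment ℝ x y ↔ ∃ t : ℝ, 0 < t ∧ t < 1 ∧ z = x + t • (y - x) := by
  rw [openSegment_eq_image']
  constructor
  · rintro ⟨t, ⟨ht0, ht1⟩, rfl⟩; exact ⟨t, ht0, ht1, rfl⟩
  · rintro ⟨t, ht0, ht1, rfl⟩; exact ⟨t, ⟨ht0, ht1⟩, rfl⟩

lemma mem_segment' {x y z : ℝ × ℝ} :
    z ∈ segment ℝ x y ↔ ∃ t : ℝ, 0 ≤ t ∧ t ≤ 1 ∧ z = x + t • (y - x) := by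
  rw [segment_eq_image']
  constructor
  · rintro ⟨t, ⟨ht0, ht1⟩, rfl⟩; exact ⟨t, ht0, ht1, rfl⟩
  · rintro ⟨t, ht0, ht1, rfl⟩; exact ⟨t, ⟨ht0, ht1⟩, rfl⟩

/-- two open segments from a common endpoint are disjoint if the three points
are not collinear (cr ≠ 0). -/
lemma openSegment_disj_of_cr {o x y : ℝ × ℝ} (h : cr o x y ≠ 0) :
    openSegment ℝ o x ∩ openSegment ℝ o y = ∅ := by
  ext z
  simp only [Set.mem_inter_iff, Set.mem_empty_iff_false, iff_false, not_and]
  intro hzx hzy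
  rw [mem_openSegment'] at hzx hzy
  obtain ⟨s, hs0, _, hzs⟩ := hzx
  obtain ⟨t, ht0, _, hzt⟩ := hzy
  have e : o + s • (x - o) = o + t • (y - o) := hzs.symm.trans hzt
  have e1 : s * (x.1 - o.1) = t * (y.1 - o.1) := by
    have := congrArg Prod.fst e
    simp only [Prod.fst_add, Prod.smul_fst, Prod.fst_sub, smul_eq_mul] at this
    linarith
  have e2 : s * (x.2 - o.2) = t * (y.2 - o.2) := by
    have := congrArg Prod.snd e
    simp only [Prod.snd_add, Prod.smul_snd, Prod.snd_sub, smul_eq_mul] at this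
    linarith
  apply h
  have key : s * cr o x y = 0 := by
    unfold cr
    linear_combination (y.2 - o.2) * e1 - (y.1 - o.1) * e2
  rcases mul_eq_zero.mp key with h' | h'
  · exact absurd h' (ne_of_gt hs0)
  · exact h'

/-- closed "triangle membership" via barycentric sign products. -/
def InT (u v w z : ℝ × ℝ) : Prop :=
  0 ≤ cr z v w * cr u v w ∧ 0 ≤ cr u z w * cr u v w ∧ 0 ≤ cr u v z * cr u v w

/-- strict (interior) triangle membership. -/
def InTS (u v w z : ℝ × ℝ) : Prop :=
  0 < cr z v w * cr u v w ∧ 0 < cr u z w * cr u v w ∧ 0 < cr u v z * cr u v w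

lemma InT_vertex₁ (u v w : ℝ × ℝ) : InT u v w u :=
  ⟨mul_self_nonneg _, by rw [cr_self₁]; simp, by rw [cr_self₃]; simp⟩

lemma InT_vertex₂ (u v w : ℝ × ℝ) : InT u v w v := by
  refine ⟨?_, mul_self_nonneg _, ?_⟩
  · rw [cr_cyc v v w, cr_self₃]; simp
  · rw [cr_self₂]; simp

lemma InT_vertex₃ (u v w : ℝ × ℝ) : InT u v w w := by
  refine ⟨?_, ?_, mul_self_nonneg _⟩
  · rw [cr_cyc w v w, cr_cyc v w w, cr_self₁]; simp
  · rw [cr_cyc u w w, cr_self₁]; simp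

lemma InTS.inT {u v w z : ℝ × ℝ} (h : InTS u v w z) : InT u v w z :=
  ⟨le_of_lt h.1, le_of_lt h.2.1, le_of_lt h.2.2⟩

lemma InTS_ne {u v w z : ℝ × ℝ} (h : InTS u v w z) : cr u v w ≠ 0 := by
  intro h0
  have := h.1
  rw [h0, mul_zero] at this
  exact lt_irrefl _ this

lemma prodsign_div_nonneg {A D : ℝ} (hD : D ≠ 0) (h : 0 ≤ A * D) : 0 ≤ A / D := by
  have hD2 : 0 < D * D := mul_self_pos.mpr hD
  have : A / D = A * D / (D * D) := by field_simp
  rw [this]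
  exact div_nonneg h (le_of_lt hD2)

lemma prodsign_div_pos {A D : ℝ} (hD : D ≠ 0) (h : 0 < A * D) : 0 < A / D := by
  have hD2 : 0 < D * D := mul_self_pos.mpr hD
  have : A / D = A * D / (D * D) := by field_simp
  rw [this]
  exact div_pos h hD2

/-- Extract nonnegative barycentric coefficients from InT. -/
lemma InT_coeffs {u v w z : ℝ × ℝ} (hD : cr u v w ≠ 0) (h : InT u v w z) :
    ∃ α β γ : ℝ, 0 ≤ α ∧ 0 ≤ β ∧ 0 ≤ γ ∧ α + β + γ = 1 ∧ z = α • u + β • v + γ • w := by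
  refine ⟨cr z v w / cr u v w, cr u z w / cr u v w, cr u v z / cr u v w,
    prodsign_div_nonneg hD h.1, prodsign_div_nonneg hD h.2.1, prodsign_div_nonneg hD h.2.2,
    ?_, cr_bary z hD⟩
  field_simp
  linear_combination cr_sum u v w z

/-- Strict coefficients from InTS. -/
lemma InTS_coeffs {u v w z : ℝ × ℝ} (h : InTS u v w z) :
    ∃ α β γ : ℝ, 0 < α ∧ 0 < β ∧ 0 < γ ∧ α + β + γ = 1 ∧ z = α • u + β • v + γ • w := by
  have hD := InTS_ne h
  refine ⟨cr z v w / cr u v w, cr u z w / cr u v w, cr u v z / cr u v w,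
    prodsign_div_pos hD h.1, prodsign_div_pos hD h.2.1, prodsign_div_pos hD h.2.2,
    ?_, cr_bary z hD⟩
  field_simp
  linear_combination cr_sum u v w z

/-- the four cr-numerators of a combination. -/
lemma cr_combo_first {u v w z : ℝ × ℝ} {α β γ : ℝ} (hsum : α + β + γ = 1)
    (hz : z = α • u + β • v + γ • w) : cr z v w = α * cr u v w := by
  rw [cr_cyc z v w, hz, cr_combo3 v w u v w α β γ hsum, cr_cyc v w u]
  rw [show cr v w v = 0 from cr_self₃ v w, show cr v w w = 0 from cr_self₂ v w]
  rw [cr_cyc w u v]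
  ring

lemma cr_combo_second {u v w z : ℝ × ℝ} {α β γ : ℝ} (hsum : α + β + γ = 1)
    (hz : z = α • u + β • v + γ • w) : cr u z w = β * cr u v w := by
  have h1 : cr u z w = - cr u w z := cr_swap u z w
  rw [h1, hz, cr_combo3 u w u v w α β γ hsum]
  rw [show cr u w u = 0 from cr_self₃ u w, show cr u w w = 0 from cr_self₂ u w]
  rw [show cr u w v = - cr u v w from cr_swap u w v]
  ring

lemma cr_combo_third {u v w z : ℝ × ℝ} {α β γ : ℝ} (hsum : α + β + γ = 1)
    (hz : z = α • u + β • v + γ • w) : cr u v z = γ * cr u v w := by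
  rw [hz, cr_combo3 u v u v w α β γ hsum]
  rw [show cr u v u = 0 from cr_self₃ u v, show cr u v v = 0 from cr_self₂ u v]
  ring

/-- membership from nonnegative coefficients. -/
lemma InT_of_coeffs {u v w z : ℝ × ℝ} {α β γ : ℝ} (hα : 0 ≤ α) (hβ : 0 ≤ β) (hγ : 0 ≤ γ)
    (hsum : α + β + γ = 1) (hz : z = α • u + β • v + γ • w) : InT u v w z := by
  refine ⟨?_, ?_, ?_⟩
  · rw [cr_combo_first hsum hz]; nlinarith [mul_self_nonneg (cr u v w)]
  · rw [cr_combo_second hsum hz]; nlinarith [mul_self_nonneg (cr u v w)]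
  · rw [cr_combo_third hsum hz]; nlinarith [mul_self_nonneg (cr u v w)]

lemma InTS_of_coeffs {u v w z : ℝ × ℝ} {α β γ : ℝ} (hα : 0 < α) (hβ : 0 < β) (hγ : 0 < γ)
    (hD : cr u v w ≠ 0)
    (hsum : α + β + γ = 1) (hz : z = α • u + β • v + γ • w) : InTS u v w z := by
  have hD2 : 0 < cr u v w * cr u v w := by
    rcases hD.lt_or_gt with h | h <;> nlinarith
  refine ⟨?_, ?_, ?_⟩
  · rw [cr_combo_first hsum hz]; nlinarith
  · rw [cr_combo_second hsum hz]; nlinarith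
  · rw [cr_combo_third hsum hz]; nlinarith

/-- closure of InT under convex combination of three members. -/
lemma InT_combo {u v w p1 p2 p3 z : ℝ × ℝ} (h1 : InT u v w p1) (h2 : InT u v w p2)
    (h3 : InT u v w p3) {α β γ : ℝ} (hα : 0 ≤ α) (hβ : 0 ≤ β) (hγ : 0 ≤ γ)
    (hsum : α + β + γ = 1) (hz : z = α • p1 + β • p2 + γ • p3) : InT u v w z := by
  have e1 : cr z v w = α * cr p1 v w + β * cr p2 v w + γ * cr p3 v w := by
    rw [cr_cyc z v w, hz, cr_combo3 v w p1 p2 p3 α β γ hsum,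
      cr_cyc v w p1, cr_cyc w p1 v, cr_cyc v w p2, cr_cyc w p2 v, cr_cyc v w p3, cr_cyc w p3 v]
  have e2 : cr u z w = α * cr u p1 w + β * cr u p2 w + γ * cr u p3 w := by
    rw [show cr u z w = - cr u w z from cr_swap u z w, hz,
      cr_combo3 u w p1 p2 p3 α β γ hsum,
      show cr u w p1 = - cr u p1 w from cr_swap u w p1,
      show cr u w p2 = - cr u p2 w from cr_swap u w p2,
      show cr u w p3 = - cr u p3 w from cr_swap u w p3]
    ring
  have e3 : cr u v z = α * cr u v p1 + β * cr u v p2 + γ * cr u v p3 := by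
    rw [hz, cr_combo3 u v p1 p2 p3 α β γ hsum]
  refine ⟨?_, ?_, ?_⟩
  · rw [e1]; nlinarith [h1.1, h2.1, h3.1]
  · rw [e2]; nlinarith [h1.2.1, h2.2.1, h3.2.1]
  · rw [e3]; nlinarith [h1.2.2, h2.2.2, h3.2.2]

lemma gp_cr {P : Finset (ℝ × ℝ)} (hgp : GenPos P) {a b c : ℝ × ℝ}
    (ha : a ∈ P) (hb : b ∈ P) (hc : c ∈ P)
    (hab : a ≠ b) (hac : a ≠ c) (hbc : b ≠ c) : cr a b c ≠ 0 :=
  fun h => hgp a ha b hb c hc hab hac hbc (collinear_of_cr_eq_zero h)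

section Graph

variable {P : Finset (ℝ × ℝ)} {T : SimpleGraph P}

/-- no edge of `T` (not incident to `p`) crosses the open segment from `p` to `z`. -/
def NC (T : SimpleGraph P) (p : P) (z : ℝ × ℝ) : Prop :=
  ∀ a b : P, T.Adj a b → (↑a : ℝ × ℝ) ≠ ↑p → (↑b : ℝ × ℝ) ≠ ↑p →
    openSegment ℝ (↑a : ℝ × ℝ) ↑b ∩ openSegment ℝ (↑p : ℝ × ℝ) z = ∅

lemma adj_coe_ne {a b : P} (h : T.Adj a b) : (↑a : ℝ × ℝ) ≠ ↑b :=
  fun he => h.ne (Subtype.coe_injective he)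

lemma cr_line_pt (p d : ℝ × ℝ) (t : ℝ) : cr p d (p + t • (d - p)) = 0 := by
  rw [cr_param p d p d t, cr_self₃, cr_self₂]; ring

lemma two_crossings_impossible (hgp : GenPos P) {p d a b : P}
    (hpd : (↑p : ℝ × ℝ) ≠ ↑d) (hab : T.Adj a b)
    (ha : (↑a : ℝ × ℝ) ≠ ↑p) (hb : (↑b : ℝ × ℝ) ≠ ↑p) {t₁ t₂ : ℝ}
    (h₁ : ((↑p : ℝ × ℝ) + t₁ • (↑d - ↑p)) ∈ openSegment ℝ (↑a : ℝ × ℝ) ↑b)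
    (h₂ : ((↑p : ℝ × ℝ) + t₂ • (↑d - ↑p)) ∈ openSegment ℝ (↑a : ℝ × ℝ) ↑b)
    (hne : t₁ ≠ t₂) : False := by
  rw [mem_openSegment'] at h₁ h₂
  obtain ⟨s₁, hs₁0, hs₁1, he₁⟩ := h₁
  obtain ⟨s₂, hs₂0, hs₂1, he₂⟩ := h₂
  have hAB : cr ↑p ↑d ↑a = cr ↑p ↑d ↑b ∧ cr ↑p ↑d ↑a = 0 := by
    have c₁ : (1 - s₁) * cr ↑p ↑d ↑a + s₁ * cr ↑p ↑d ↑b = 0 := by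
      rw [← cr_param (↑p) (↑d) (↑a) (↑b) s₁, ← he₁, cr_line_pt]
    have c₂ : (1 - s₂) * cr ↑p ↑d ↑a + s₂ * cr ↑p ↑d ↑b = 0 := by
      rw [← cr_param (↑p) (↑d) (↑a) (↑b) s₂, ← he₂, cr_line_pt]
    have hs : s₁ ≠ s₂ := by
      intro h
      apply hne
      rw [h] at he₁
      have := he₁.trans he₂.symm
      have h1 : t₁ * ((d:ℝ×ℝ).1 - (p:ℝ×ℝ).1) = t₂ * ((d:ℝ×ℝ).1 - (p:ℝ×ℝ).1) := by
        have := congrArg Prod.fst this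
        simp only [Prod.fst_add, Prod.smul_fst, Prod.fst_sub, smul_eq_mul] at this
        linarith
      have h2 : t₁ * ((d:ℝ×ℝ).2 - (p:ℝ×ℝ).2) = t₂ * ((d:ℝ×ℝ).2 - (p:ℝ×ℝ).2) := by
        have := congrArg Prod.snd this
        simp only [Prod.snd_add, Prod.smul_snd, Prod.snd_sub, smul_eq_mul] at this
        linarith
      have hdp : (↑d - ↑p : ℝ × ℝ) ≠ 0 := sub_ne_zero.mpr (Ne.symm hpd)
      rcases eq_or_ne ((d:ℝ×ℝ).1 - (p:ℝ×ℝ).1) 0 with hz | hz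
      · have hz2 : ((d:ℝ×ℝ).2 - (p:ℝ×ℝ).2) ≠ 0 := by
          intro hz2
          apply hdp
          apply Prod.ext <;> simp [Prod.fst_sub, Prod.snd_sub] <;> linarith
        have := mul_right_cancel₀ hz2 h2
        exact this
      · exact mul_right_cancel₀ hz h1
    have key : (s₁ - s₂) * (cr ↑p ↑d ↑b - cr ↑p ↑d ↑a) = 0 := by linarith [c₁, c₂]
    rcases mul_eq_zero.mp key with h | h
    · exact absurd (by linarith : s₁ = s₂) hs
    · have hEq : cr ↑p ↑d ↑a = cr ↑p ↑d ↑b := by linarith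
      constructor
      · exact hEq
      · nlinarith [c₁, hEq]
  obtain ⟨hEq, hA0⟩ := hAB
  rcases eq_or_ne (↑a : ℝ × ℝ) ↑d with had | had
  · have hbd : (↑b : ℝ × ℝ) ≠ ↑d := by
      rw [← had]; exact (adj_coe_ne hab).symm
    exact gp_cr hgp p.2 d.2 b.2 hpd (Ne.symm hb) (Ne.symm hbd) (by rw [← hEq]; exact hA0)
  · exact gp_cr hgp p.2 d.2 a.2 hpd (Ne.symm ha) (Ne.symm had) hA0

lemma exists_first_crossing (hgp : GenPos P) (p d : P) (hpd : (↑p : ℝ × ℝ) ≠ ↑d) :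
    NC T p ↑d ∨ ∃ (t : ℝ) (a b : P), 0 < t ∧ t < 1 ∧ T.Adj a b ∧
      (↑a : ℝ × ℝ) ≠ ↑p ∧ (↑b : ℝ × ℝ) ≠ ↑p ∧
      ((↑p : ℝ × ℝ) + t • (↑d - ↑p)) ∈ openSegment ℝ (↑a : ℝ × ℝ) ↑b ∧
      NC T p ((↑p : ℝ × ℝ) + t • (↑d - ↑p)) := by
  classical
  set S : Set ℝ := {t | (0 < t ∧ t < 1) ∧ ∃ a b : P, T.Adj a b ∧ (↑a : ℝ × ℝ) ≠ ↑p ∧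
    (↑b : ℝ × ℝ) ≠ ↑p ∧ ((↑p : ℝ × ℝ) + t • (↑d - ↑p)) ∈ openSegment ℝ (↑a : ℝ × ℝ) ↑b} with hSdef
  rcases Set.eq_empty_or_nonempty S with hS | hS
  · left
    intro a b hab ha hb
    rw [Set.eq_empty_iff_forall_notMem]
    intro z hz
    obtain ⟨hz1, hz2⟩ := hz
    rw [mem_openSegment'] at hz2
    obtain ⟨t, ht0, ht1, rfl⟩ := hz2
    have : t ∈ S := ⟨⟨ht0, ht1⟩, a, b, hab, ha, hb, hz1⟩
    rw [hS] at this
    exact this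
  · have hfin : S.Finite := by
      have hsub : S ⊆ ⋃ ab : P × P, {t : ℝ | T.Adj ab.1 ab.2 ∧
          ((↑p : ℝ × ℝ) + t • (↑d - ↑p)) ∈ openSegment ℝ (↑ab.1 : ℝ × ℝ) ↑ab.2 ∧
          (↑ab.1 : ℝ × ℝ) ≠ ↑p ∧ (↑ab.2 : ℝ × ℝ) ≠ ↑p} := by
        rintro t ⟨_, a, b, hab, ha, hb, hmem⟩
        exact Set.mem_iUnion.mpr ⟨(a, b), hab, hmem, ha, hb⟩
      refine Set.Finite.subset (Set.finite_iUnion fun ab => ?_) hsub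
      apply Set.Subsingleton.finite
      intro t₁ h₁ t₂ h₂
      by_contra hne
      exact two_crossings_impossible hgp hpd h₁.1 h₁.2.2.1 h₁.2.2.2 h₁.2.1 h₂.2.1 hne
    right
    have hne' : hfin.toFinset.Nonempty := by
      rw [Set.Finite.toFinset_nonempty]; exact hS
    set t₀ := hfin.toFinset.min' hne' with ht₀def
    have ht₀S : t₀ ∈ S := by
      have := hfin.toFinset.min'_mem hne'
      rwa [Set.Finite.mem_toFinset] at this
    have hmin : ∀ t ∈ S, t₀ ≤ t := fun t ht =>
      hfin.toFinset.min'_le t (hfin.mem_toFinset.mpr ht)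
    obtain ⟨⟨ht0, ht1⟩, a, b, hab, ha, hb, hmem⟩ := ht₀S
    refine ⟨t₀, a, b, ht0, ht1, hab, ha, hb, hmem, ?_⟩
    intro a' b' hadj ha' hb'
    rw [Set.eq_empty_iff_forall_notMem]
    rintro z ⟨hz1, hz2⟩
    rw [mem_openSegment'] at hz2
    obtain ⟨s, hs0, hs1, rfl⟩ := hz2
    have hform : (↑p : ℝ × ℝ) + s • ((↑p : ℝ × ℝ) + t₀ • (↑d - ↑p) - ↑p) =
        (↑p : ℝ × ℝ) + (s * t₀) • (↑d - ↑p) := by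
      rw [add_sub_cancel_left, smul_smul]
    rw [hform] at hz1
    have hst : s * t₀ ∈ S := ⟨⟨by positivity, by nlinarith⟩, a', b', hadj, ha', hb', hz1⟩
    have := hmin _ hst
    nlinarith

lemma straddle (hgp : GenPos P) {p c a b : P}
    (hpc : (↑p : ℝ × ℝ) ≠ ↑c) (hanb : (↑a : ℝ × ℝ) ≠ ↑b)
    (ha : (↑a : ℝ × ℝ) ≠ ↑p) (hb : (↑b : ℝ × ℝ) ≠ ↑p) {t : ℝ} (ht0 : 0 < t) (ht1 : t < 1)
    (hx : ((↑p : ℝ × ℝ) + t • (↑c - ↑p)) ∈ openSegment ℝ (↑a : ℝ × ℝ) ↑b) :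
    (↑a : ℝ × ℝ) ≠ ↑c ∧ (↑b : ℝ × ℝ) ≠ ↑c ∧ cr ↑p ↑c ↑a * cr ↑p ↑c ↑b < 0 := by
  rw [mem_openSegment'] at hx
  obtain ⟨s, hs0, hs1, he⟩ := hx
  have hc0 : (1 - s) * cr ↑p ↑c ↑a + s * cr ↑p ↑c ↑b = 0 := by
    rw [← cr_param (↑p) (↑c) (↑a) (↑b) s, ← he, cr_line_pt]
  have hac : (↑a : ℝ × ℝ) ≠ ↑c := by
    intro h
    have hA : cr ↑p ↑c ↑a = 0 := by rw [h]; exact cr_self₂ _ _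
    have hB : cr ↑p ↑c ↑b = 0 := by
      rw [hA] at hc0
      have : s * cr ↑p ↑c ↑b = 0 := by linarith
      rcases mul_eq_zero.mp this with h' | h'
      · exact absurd h' (ne_of_gt hs0)
      · exact h'
    have hbc : (↑b : ℝ × ℝ) ≠ ↑c := by rw [← h]; exact hanb.symm
    exact gp_cr hgp p.2 c.2 b.2 hpc (Ne.symm hb) (Ne.symm hbc) hB
  have hbc : (↑b : ℝ × ℝ) ≠ ↑c := by
    intro h
    have hB : cr ↑p ↑c ↑b = 0 := by rw [h]; exact cr_self₂ _ _
    have hA : cr ↑p ↑c ↑a = 0 := by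
      rw [hB] at hc0
      have : (1 - s) * cr ↑p ↑c ↑a = 0 := by linarith
      rcases mul_eq_zero.mp this with h' | h'
      · have : s = 1 := by linarith
        exact absurd this (ne_of_lt hs1)
      · exact h'
    exact gp_cr hgp p.2 c.2 a.2 hpc (Ne.symm ha) (Ne.symm hac) hA
  have hA : cr ↑p ↑c ↑a ≠ 0 := gp_cr hgp p.2 c.2 a.2 hpc (Ne.symm ha) (Ne.symm hac)
  have hB : cr ↑p ↑c ↑b ≠ 0 := gp_cr hgp p.2 c.2 b.2 hpc (Ne.symm hb) (Ne.symm hbc)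
  refine ⟨hac, hbc, ?_⟩
  rcases hA.lt_or_gt with h1 | h1 <;> rcases hB.lt_or_gt with h2 | h2 <;> nlinarith

end Graph

section Escape

variable {P : Finset (ℝ × ℝ)} {T : SimpleGraph P}

lemma root_eq {X A : ℝ} (h : 0 < X - A) : (1 - X / (X - A)) * X + X / (X - A) * A = 0 := by
  have hne : X - A ≠ 0 := ne_of_gt h
  field_simp
  ring

lemma cross_hits_base (hgp : GenPos P) (hpl : IsPlaneGraph P T) {u₀ d a b p : P}
    (hu₀d : T.Adj u₀ d) (hab : T.Adj a b)
    (hu₀p : (↑u₀ : ℝ × ℝ) ≠ ↑p) (hdp : (↑d : ℝ × ℝ) ≠ ↑p)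
    {t : ℝ}
    (hx' : ((↑p : ℝ × ℝ) + t • (↑d - ↑p)) ∈ openSegment ℝ (↑a : ℝ × ℝ) ↑b)
    {z : ℝ × ℝ} (hz1 : z ∈ openSegment ℝ (↑a : ℝ × ℝ) ↑b)
    (hz2 : z ∈ openSegment ℝ (↑u₀ : ℝ × ℝ) ↑d) : False := by
  by_cases hsym : s(a, b) = s(u₀, d)
  · have hxu : ((↑p : ℝ × ℝ) + t • (↑d - ↑p)) ∈ openSegment ℝ (↑u₀ : ℝ × ℝ) ↑d := by
      rcases Sym2.eq_iff.mp hsym with ⟨h1, h2⟩ | ⟨h1, h2⟩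
      · have h := hx'
        rw [h1, h2] at h
        exact h
      · have h := hx'
        rw [h1, h2, openSegment_symm] at h
        exact h
    rw [mem_openSegment'] at hxu
    obtain ⟨η, hη0, hη1, he⟩ := hxu
    have h0 : cr (↑p : ℝ × ℝ) ↑d ((↑p : ℝ × ℝ) + t • (↑d - ↑p)) = 0 := cr_line_pt _ _ _
    rw [he, cr_param, cr_self₂] at h0
    have hcr : cr (↑p : ℝ × ℝ) ↑d ↑u₀ ≠ 0 :=
      gp_cr hgp p.2 d.2 u₀.2 (Ne.symm hdp) (Ne.symm hu₀p) (Ne.symm (adj_coe_ne hu₀d))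
    have hz : (1 - η) * cr (↑p : ℝ × ℝ) ↑d ↑u₀ = 0 := by linarith
    rcases mul_eq_zero.mp hz with h | h
    · linarith
    · exact hcr h
  · have hdisj := hpl a b u₀ d hab hu₀d hsym
    rw [Set.eq_empty_iff_forall_notMem] at hdisj
    exact hdisj z ⟨hz1, hz2⟩

lemma exit_xd (hgp : GenPos P) (hpl : IsPlaneGraph P T) {p u₀ d a b : P}
    (hu₀d : T.Adj u₀ d) (hab : T.Adj a b)
    (hu₀p : (↑u₀ : ℝ × ℝ) ≠ ↑p) (hdp : (↑d : ℝ × ℝ) ≠ ↑p)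
    {x : ℝ × ℝ} (hx : x ∈ openSegment ℝ (↑u₀ : ℝ × ℝ) ↑d) (hD : cr ↑p x ↑d ≠ 0)
    {t : ℝ}
    (hx' : ((↑p : ℝ × ℝ) + t • (↑d - ↑p)) ∈ openSegment ℝ (↑a : ℝ × ℝ) ↑b)
    {z : ℝ × ℝ} (hzab : z ∈ openSegment ℝ (↑a : ℝ × ℝ) ↑b)
    (h1 : cr z x ↑d = 0) (h2 : 0 < cr ↑p z ↑d * cr ↑p x ↑d)
    (h3 : 0 ≤ cr ↑p x z * cr ↑p x ↑d) : False := by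
  set D := cr ↑p x ↑d with hDdef
  have hβ : 0 < cr ↑p z ↑d / D := prodsign_div_pos hD h2
  have hγ : 0 ≤ cr ↑p x z / D := prodsign_div_nonneg hD h3
  have hsum : cr ↑p z ↑d / D + cr ↑p x z / D = 1 := by
    have := cr_sum (↑p : ℝ × ℝ) x ↑d z
    field_simp
    linarith
  have hz : z = (cr ↑p z ↑d / D) • x + (cr ↑p x z / D) • (↑d : ℝ × ℝ) := by
    have hb := cr_bary z hD
    rw [h1, zero_div, zero_smul, zero_add] at hb
    exact hb
  rw [mem_openSegment'] at hx
  obtain ⟨ξ, hξ0, hξ1, hxe⟩ := hx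
  set β := cr ↑p z ↑d / D
  set γ := cr ↑p x z / D
  have hzu : z = (↑u₀ : ℝ × ℝ) + (γ + β * ξ) • (↑d - ↑u₀) := by
    rw [hz, hxe]
    have hγ1 : γ = 1 - β := by linarith
    rw [hγ1]
    module
  have hmem : z ∈ openSegment ℝ (↑u₀ : ℝ × ℝ) ↑d := by
    rw [mem_openSegment']
    exact ⟨γ + β * ξ, by nlinarith, by nlinarith, hzu⟩
  exact cross_hits_base hgp hpl hu₀d hab hu₀p hdp hx' hzab hmem

lemma exit_px (hgp : GenPos P) (hpl : IsPlaneGraph P T) {p u₀ d a b : P}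
    (hu₀d : T.Adj u₀ d) (hab : T.Adj a b)
    (hu₀p : (↑u₀ : ℝ × ℝ) ≠ ↑p) (hdp : (↑d : ℝ × ℝ) ≠ ↑p)
    (hap : (↑a : ℝ × ℝ) ≠ ↑p) (hbp : (↑b : ℝ × ℝ) ≠ ↑p)
    {x : ℝ × ℝ} (hx : x ∈ openSegment ℝ (↑u₀ : ℝ × ℝ) ↑d) (hD : cr ↑p x ↑d ≠ 0)
    (hNCx : NC T p x)
    {t : ℝ}
    (hx' : ((↑p : ℝ × ℝ) + t • (↑d - ↑p)) ∈ openSegment ℝ (↑a : ℝ × ℝ) ↑b)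
    {z : ℝ × ℝ} (hzab : z ∈ openSegment ℝ (↑a : ℝ × ℝ) ↑b)
    (h3 : cr ↑p x z = 0) (h2 : 0 < cr ↑p z ↑d * cr ↑p x ↑d)
    (h1 : 0 ≤ cr z x ↑d * cr ↑p x ↑d) : False := by
  set D := cr ↑p x ↑d with hDdef
  have hβ : 0 < cr ↑p z ↑d / D := prodsign_div_pos hD h2
  have hα : 0 ≤ cr z x ↑d / D := prodsign_div_nonneg hD h1
  have hsum : cr z x ↑d / D + cr ↑p z ↑d / D = 1 := by
    have := cr_sum (↑p : ℝ × ℝ) x ↑d z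
    field_simp
    linarith
  have hz : z = (cr z x ↑d / D) • (↑p : ℝ × ℝ) + (cr ↑p z ↑d / D) • x := by
    have hb := cr_bary z hD
    rw [h3, zero_div, zero_smul, add_zero] at hb
    exact hb
  set α := cr z x ↑d / D
  set β := cr ↑p z ↑d / D
  rcases eq_or_lt_of_le hα with hα0 | hα0
  · -- z = x
    have hzx : z = x := by
      rw [hz, ← hα0, zero_smul, zero_add]
      have hβ1 : β = 1 := by linarith
      rw [hβ1, one_smul]
    rw [hzx] at hzab
    exact cross_hits_base hgp hpl hu₀d hab hu₀p hdp hx' hzab hx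
  · -- z ∈ open p x
    have hzpx : z = (↑p : ℝ × ℝ) + β • (x - ↑p) := by
      rw [hz]
      have hα1 : α = 1 - β := by linarith
      rw [hα1]
      module
    have hmem : z ∈ openSegment ℝ (↑p : ℝ × ℝ) x := by
      rw [mem_openSegment']
      exact ⟨β, hβ, by linarith, hzpx⟩
    have hdisj := hNCx a b hab hap hbp
    rw [Set.eq_empty_iff_forall_notMem] at hdisj
    exact hdisj z ⟨hzab, hmem⟩

lemma escape (hgp : GenPos P) (hpl : IsPlaneGraph P T) {p u₀ d a b : P}
    (hu₀d : T.Adj u₀ d) (hu₀p : (↑u₀ : ℝ × ℝ) ≠ ↑p) (hdp : (↑d : ℝ × ℝ) ≠ ↑p)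
    {x : ℝ × ℝ} (hx : x ∈ openSegment ℝ (↑u₀ : ℝ × ℝ) ↑d) (hNCx : NC T p x)
    (hD : cr ↑p x ↑d ≠ 0)
    (hab : T.Adj a b) (hap : (↑a : ℝ × ℝ) ≠ ↑p) (hbp : (↑b : ℝ × ℝ) ≠ ↑p)
    {t : ℝ} (ht0 : 0 < t) (ht1 : t < 1)
    (hx' : ((↑p : ℝ × ℝ) + t • (↑d - ↑p)) ∈ openSegment ℝ (↑a : ℝ × ℝ) ↑b)
    (hside : 0 < cr ↑p ↑d ↑a * cr ↑p ↑d x) :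
    InT ↑p x ↑d ↑a := by
  set D := cr ↑p x ↑d with hDdef
  set x' : ℝ × ℝ := (↑p : ℝ × ℝ) + t • (↑d - ↑p) with hx'def
  have hDD : 0 < D * D := mul_self_pos.mpr hD
  -- second product at a is positive
  have hP2a : 0 < cr ↑p ↑a ↑d * D := by
    have e : cr (↑p : ℝ × ℝ) ↑a ↑d * D = cr ↑p ↑d ↑a * cr ↑p ↑d x := by
      rw [hDdef]
      unfold cr
      ring
    rw [e]; exact hside
  -- coordinates of x'
  have hC1x' : cr x' x ↑d = (1 - t) * D := by
    rw [cr_cyc x' x ↑d, hx'def, cr_param, cr_self₂, ← cr_cyc (↑p : ℝ × ℝ) x ↑d]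
    ring
  have hC2x' : cr (↑p : ℝ × ℝ) x' ↑d = 0 := by
    rw [cr_swap (↑p : ℝ × ℝ) x' ↑d, hx'def, cr_line_pt]
    ring
  have hC3x' : cr (↑p : ℝ × ℝ) x x' = t * D := by
    rw [hx'def, cr_param, cr_self₃]
    ring
  -- walk values
  have hw1 : ∀ s : ℝ, cr (x' + s • (↑a - x')) x ↑d
      = (1 - s) * ((1 - t) * D) + s * cr ↑a x ↑d := by
    intro s
    rw [cr_cyc _ x ↑d, cr_param, ← cr_cyc x' x ↑d, hC1x', ← cr_cyc (↑a : ℝ × ℝ) x ↑d]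
  have hw2 : ∀ s : ℝ, cr (↑p : ℝ × ℝ) (x' + s • (↑a - x')) ↑d
      = s * cr ↑p ↑a ↑d := by
    intro s
    have e1 : cr (↑p : ℝ × ℝ) (x' + s • (↑a - x')) ↑d = cr (↑d : ℝ × ℝ) ↑p (x' + s • (↑a - x')) := by
      rw [cr_cyc (↑d : ℝ × ℝ) ↑p _]
    rw [e1, cr_param]
    have e2 : cr (↑d : ℝ × ℝ) ↑p x' = 0 := by
      rw [cr_cyc (↑d : ℝ × ℝ) ↑p x', hC2x']
    have e3 : cr (↑d : ℝ × ℝ) ↑p ↑a = cr (↑p : ℝ × ℝ) ↑a ↑d := by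
      rw [cr_cyc (↑d : ℝ × ℝ) ↑p ↑a]
    rw [e2, e3]
    ring
  have hw3 : ∀ s : ℝ, cr (↑p : ℝ × ℝ) x (x' + s • (↑a - x'))
      = (1 - s) * (t * D) + s * cr ↑p x ↑a := by
    intro s
    rw [cr_param, hC3x']
  -- walk membership
  have hwmem : ∀ s : ℝ, 0 < s → s < 1 → (x' + s • (↑a - x')) ∈ openSegment ℝ (↑a : ℝ × ℝ) ↑b := by
    intro s hs0 hs1
    rw [mem_openSegment'] at hx' ⊢
    obtain ⟨σ, hσ0, hσ1, hσe⟩ := hx'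
    refine ⟨σ * (1 - s), by nlinarith, by nlinarith, ?_⟩
    rw [hσe]
    module
  -- main case analysis
  by_contra hInT
  set A1 := cr ↑a x ↑d * D with hA1def
  set A3 := cr ↑p x ↑a * D with hA3def
  have hbad : A1 < 0 ∨ A3 < 0 := by
    by_contra hc
    push_neg at hc
    exact hInT ⟨hc.1, le_of_lt hP2a, hc.2⟩
  set X1 := (1 - t) * (D * D) with hX1def
  set X3 := t * (D * D) with hX3def
  have hX1 : 0 < X1 := by rw [hX1def]; nlinarith
  have hX3 : 0 < X3 := by rw [hX3def]; nlinarith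
  -- given a parameter s with the right signs, finish via exit lemmas
  have finish1 : ∀ s : ℝ, 0 < s → s < 1 →
      (1 - s) * X1 + s * A1 = 0 → 0 ≤ (1 - s) * X3 + s * A3 → False := by
    intro s hs0 hs1 hv1 hv3
    refine exit_xd hgp hpl hu₀d hab hu₀p hdp hx hD hx' (hwmem s hs0 hs1) ?_ ?_ ?_
    · have hprod : cr (x' + s • (↑a - x')) x ↑d * D = 0 := by
        rw [hw1 s]
        rw [hX1def, hA1def] at hv1
        linear_combination hv1
      rcases mul_eq_zero.mp hprod with h | h
      · exact h
      · exact absurd h hD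
    · rw [hw2 s]
      nlinarith [hP2a, hs0]
    · rw [hw3 s]
      have he : ((1 - s) * (t * D) + s * cr (↑p : ℝ × ℝ) x ↑a) * D = (1 - s) * X3 + s * A3 := by
        rw [hX3def, hA3def]; ring
      rw [he]
      exact hv3
  have finish3 : ∀ s : ℝ, 0 < s → s < 1 →
      (1 - s) * X3 + s * A3 = 0 → 0 ≤ (1 - s) * X1 + s * A1 → False := by
    intro s hs0 hs1 hv3 hv1
    refine exit_px hgp hpl hu₀d hab hu₀p hdp hap hbp hx hD hNCx hx' (hwmem s hs0 hs1) ?_ ?_ ?_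
    · have hprod : cr (↑p : ℝ × ℝ) x (x' + s • (↑a - x')) * D = 0 := by
        rw [hw3 s]
        rw [hX3def, hA3def] at hv3
        linear_combination hv3
      rcases mul_eq_zero.mp hprod with h | h
      · exact h
      · exact absurd h hD
    · rw [hw2 s]
      nlinarith [hP2a, hs0]
    · rw [hw1 s]
      have he : ((1 - s) * ((1 - t) * D) + s * cr (↑a : ℝ × ℝ) x ↑d) * D = (1 - s) * X1 + s * A1 := by
        rw [hX1def, hA1def]; ring
      rw [he]
      exact hv1
  rcases lt_or_ge A1 0 with hA1 | hA1
  · rcases lt_or_ge A3 0 with hA3 | hA3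
    · set s1 := X1 / (X1 - A1) with hs1def
      set s3 := X3 / (X3 - A3) with hs3def
      have hd1 : 0 < X1 - A1 := by linarith
      have hd3 : 0 < X3 - A3 := by linarith
      have hs10 : 0 < s1 := div_pos hX1 hd1
      have hs11 : s1 < 1 := by rw [hs1def, div_lt_one hd1]; linarith
      have hs30 : 0 < s3 := div_pos hX3 hd3
      have hs31 : s3 < 1 := by rw [hs3def, div_lt_one hd3]; linarith
      rcases le_total s1 s3 with hle | hle
      · apply finish1 s1 hs10 hs11
        · rw [hs1def]; exact root_eq hd1
        · have hkey : s1 * (X3 - A3) ≤ X3 := by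
            rw [hs3def] at hle
            exact (le_div_iff₀ hd3).mp hle
          nlinarith
      · apply finish3 s3 hs30 hs31
        · rw [hs3def]; exact root_eq hd3
        · have hkey : s3 * (X1 - A1) ≤ X1 := by
            rw [hs1def] at hle
            exact (le_div_iff₀ hd1).mp hle
          nlinarith
    · set s1 := X1 / (X1 - A1) with hs1def
      have hd1 : 0 < X1 - A1 := by linarith
      have hs10 : 0 < s1 := div_pos hX1 hd1
      have hs11 : s1 < 1 := by rw [hs1def, div_lt_one hd1]; linarith
      apply finish1 s1 hs10 hs11
      · rw [hs1def]; exact root_eq hd1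
      · have h1 : 0 ≤ (1 - s1) * X3 := mul_nonneg (by linarith) (le_of_lt hX3)
        have h2 : 0 ≤ s1 * A3 := mul_nonneg (le_of_lt hs10) hA3
        linarith
  · have hA3 : A3 < 0 := hbad.resolve_left (not_lt.mpr hA1)
    set s3 := X3 / (X3 - A3) with hs3def
    have hd3 : 0 < X3 - A3 := by linarith
    have hs30 : 0 < s3 := div_pos hX3 hd3
    have hs31 : s3 < 1 := by rw [hs3def, div_lt_one hd3]; linarith
    apply finish3 s3 hs30 hs31
    · rw [hs3def]; exact root_eq hd3
    · have h1 : 0 ≤ (1 - s3) * X1 := mul_nonneg (by linarith) (le_of_lt hX1)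
      have h2 : 0 ≤ s3 * A1 := mul_nonneg (le_of_lt hs30) hA1
      linarith

end Escape

section MRL

variable {P : Finset (ℝ × ℝ)} {T : SimpleGraph P}

lemma mrl (hgp : GenPos P) (hpl : IsPlaneGraph P T) (p : P) :
    ∀ n : ℕ, ∀ (x : ℝ × ℝ) (d u₀ : P), T.Adj u₀ d → (↑u₀ : ℝ × ℝ) ≠ ↑p →
      (↑d : ℝ × ℝ) ≠ ↑p →
      x ∈ openSegment ℝ (↑u₀ : ℝ × ℝ) ↑d → cr ↑p x ↑d ≠ 0 → NC T p x →
      (Finset.univ.filter (fun r : P => InT ↑p x ↑d ↑r)).card ≤ n →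
      ∃ r : P, (↑r : ℝ × ℝ) ≠ ↑p ∧ InT ↑p x ↑d ↑r ∧ NC T p ↑r := by
  intro n
  induction n with
  | zero =>
    intro x d u₀ hu₀d hu₀p hdp hx hD hNCx hcard
    exfalso
    have hdmem : d ∈ Finset.univ.filter (fun r : P => InT ↑p x ↑d ↑r) := by
      simp only [Finset.mem_filter, Finset.mem_univ, true_and]
      exact InT_vertex₃ _ _ _
    have := Finset.card_pos.mpr ⟨d, hdmem⟩
    omega
  | succ n ih =>
    intro x d u₀ hu₀d hu₀p hdp hx hD hNCx hcard
    rcases exists_first_crossing (T := T) hgp p d (Ne.symm hdp) with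
      hNC | ⟨t, a, b, ht0, ht1, hab, hap, hbp, hx', hNCx'⟩
    · exact ⟨d, hdp, InT_vertex₃ _ _ _, hNC⟩
    obtain ⟨had, hbd, hprod⟩ :=
      straddle hgp (Ne.symm hdp) (adj_coe_ne hab) hap hbp ht0 ht1 hx'
    have hXne : cr (↑p : ℝ × ℝ) ↑d x ≠ 0 := by
      intro h
      apply hD
      rw [cr_swap (↑p : ℝ × ℝ) x ↑d, h]
      ring
    have hAne : cr (↑p : ℝ × ℝ) ↑d ↑a ≠ 0 := fun h => by rw [h] at hprod; nlinarith
    have hBne : cr (↑p : ℝ × ℝ) ↑d ↑b ≠ 0 := fun h => by rw [h] at hprod; nlinarith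
    obtain ⟨a', b', hab', hap', hbp', had', hx'', hside⟩ :
        ∃ a' b' : P, T.Adj a' b' ∧ (↑a' : ℝ × ℝ) ≠ ↑p ∧ (↑b' : ℝ × ℝ) ≠ ↑p ∧
          (↑a' : ℝ × ℝ) ≠ ↑d ∧
          ((↑p : ℝ × ℝ) + t • (↑d - ↑p)) ∈ openSegment ℝ (↑a' : ℝ × ℝ) ↑b' ∧
          0 < cr ↑p ↑d ↑a' * cr ↑p ↑d x := by
      rcases lt_or_gt_of_ne (mul_ne_zero hAne hXne) with hneg | hpos
      · refine ⟨b, a, hab.symm, hbp, hap, hbd, by rwa [openSegment_symm], ?_⟩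
        rcases hXne.lt_or_gt with h | h <;> rcases hAne.lt_or_gt with h2 | h2 <;> nlinarith
      · exact ⟨a, b, hab, hap, hbp, had, hx', hpos⟩
    have hEsc : InT ↑p x ↑d ↑a' :=
      escape hgp hpl hu₀d hu₀p hdp hx hNCx hD hab' hap' hbp' ht0 ht1 hx'' hside
    set x' : ℝ × ℝ := (↑p : ℝ × ℝ) + t • (↑d - ↑p) with hx'def
    have hcrpda' : cr (↑p : ℝ × ℝ) ↑d ↑a' ≠ 0 := fun h => by rw [h] at hside; nlinarith
    have hcr_x'a' : cr (↑p : ℝ × ℝ) x' ↑a' = t * cr (↑p : ℝ × ℝ) ↑d ↑a' := by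
      rw [cr_swap (↑p : ℝ × ℝ) x' ↑a', hx'def, cr_param, cr_self₃,
        cr_swap (↑p : ℝ × ℝ) ↑a' ↑d]
      ring
    have hD' : cr (↑p : ℝ × ℝ) x' ↑a' ≠ 0 := by
      rw [hcr_x'a']
      exact mul_ne_zero (ne_of_gt ht0) hcrpda'
    have hx'mem : x' ∈ openSegment ℝ (↑b' : ℝ × ℝ) ↑a' := by
      rw [openSegment_symm]; exact hx''
    -- x' lies in the parent triangle
    have hx'InT : InT ↑p x ↑d x' := by
      have hC1 : cr x' x ↑d = (1 - t) * cr (↑p : ℝ × ℝ) x ↑d := by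
        rw [cr_cyc x' x ↑d, hx'def, cr_param, cr_self₂, ← cr_cyc (↑p : ℝ × ℝ) x ↑d]
        ring
      have hC2 : cr (↑p : ℝ × ℝ) x' ↑d = 0 := by
        rw [cr_swap (↑p : ℝ × ℝ) x' ↑d, hx'def, cr_line_pt]
        ring
      have hC3 : cr (↑p : ℝ × ℝ) x x' = t * cr (↑p : ℝ × ℝ) x ↑d := by
        rw [hx'def, cr_param, cr_self₃]
        ring
      refine ⟨?_, ?_, ?_⟩
      · rw [hC1]; nlinarith [mul_self_nonneg (cr (↑p : ℝ × ℝ) x ↑d)]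
      · rw [hC2]; nlinarith
      · rw [hC3]; nlinarith [mul_self_nonneg (cr (↑p : ℝ × ℝ) x ↑d)]
    have hsubset : ∀ z : ℝ × ℝ, InT ↑p x' ↑a' z → InT ↑p x ↑d z := by
      intro z hz
      obtain ⟨α, β, γ, hα, hβ, hγ, hsum, heq⟩ := InT_coeffs hD' hz
      exact InT_combo (InT_vertex₁ _ _ _) hx'InT hEsc hα hβ hγ hsum heq
    have hdnot : ¬ InT ↑p x' ↑a' ↑d := by
      intro hIn
      obtain ⟨α, β, γ, hα, hβ, hγ, hsum, heq⟩ := InT_coeffs hD' hIn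
      have hγ0 : γ = 0 := by
        have h3 := cr_combo_third hsum heq
        have hc : cr (↑p : ℝ × ℝ) x' ↑d = 0 := by
          rw [cr_swap (↑p : ℝ × ℝ) x' ↑d, hx'def, cr_line_pt]
          ring
        rw [hc] at h3
        rcases mul_eq_zero.mp h3.symm with h | h
        · exact h
        · exact absurd h hD'
      rw [hγ0, zero_smul, add_zero] at heq
      have hβ1 : β ≤ 1 := by linarith
      have hβt : β * t < 1 := by nlinarith
      have he1 : (1 - β * t) * ((↑d : ℝ × ℝ).1 - (↑p : ℝ × ℝ).1) = 0 := by
        have := congrArg Prod.fst heq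
        rw [hx'def] at this
        simp only [Prod.fst_add, Prod.smul_fst, Prod.fst_sub, smul_eq_mul] at this
        have hα1 : α = 1 - β := by linarith
        rw [hα1] at this
        nlinarith [this]
      have he2 : (1 - β * t) * ((↑d : ℝ × ℝ).2 - (↑p : ℝ × ℝ).2) = 0 := by
        have := congrArg Prod.snd heq
        rw [hx'def] at this
        simp only [Prod.snd_add, Prod.smul_snd, Prod.snd_sub, smul_eq_mul] at this
        have hα1 : α = 1 - β := by linarith
        rw [hα1] at this
        nlinarith [this]
      have hd1 : (↑d : ℝ × ℝ).1 - (↑p : ℝ × ℝ).1 = 0 := by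
        rcases mul_eq_zero.mp he1 with h | h
        · linarith
        · exact h
      have hd2 : (↑d : ℝ × ℝ).2 - (↑p : ℝ × ℝ).2 = 0 := by
        rcases mul_eq_zero.mp he2 with h | h
        · linarith
        · exact h
      apply hdp
      apply Prod.ext <;> [linarith; linarith]
    have hcard' : (Finset.univ.filter (fun r : P => InT ↑p x' ↑a' ↑r)).card ≤ n := by
      have hsub : Finset.univ.filter (fun r : P => InT ↑p x' ↑a' ↑r) ⊆
          Finset.univ.filter (fun r : P => InT ↑p x ↑d ↑r) := by
        intro r hr
        simp only [Finset.mem_filter, Finset.mem_univ, true_and] at hr ⊢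
        exact hsubset _ hr
      have hssub : Finset.univ.filter (fun r : P => InT ↑p x' ↑a' ↑r) ⊂
          Finset.univ.filter (fun r : P => InT ↑p x ↑d ↑r) := by
        rw [Finset.ssubset_iff_of_subset hsub]
        refine ⟨d, ?_, ?_⟩
        · simp only [Finset.mem_filter, Finset.mem_univ, true_and]
          exact InT_vertex₃ _ _ _
        · simp only [Finset.mem_filter, Finset.mem_univ, true_and, not_and]
          intro h
          exact absurd h hdnot
      have := Finset.card_lt_card hssub
      omega
    obtain ⟨r, hr1, hr2, hr3⟩ :=
      ih x' a' b' hab'.symm hbp' hap' hx'mem hD' hNCx' hcard'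
    exact ⟨r, hr1, hsubset _ hr2, hr3⟩

end MRL

section Wrappers

variable {P : Finset (ℝ × ℝ)} {T : SimpleGraph P}

lemma NC_full (hgp : GenPos P) {p r : P} (hpr : (↑p : ℝ × ℝ) ≠ ↑r) (h : NC T p ↑r) :
    ∀ a b : P, T.Adj a b → s(a, b) ≠ s(p, r) →
      openSegment ℝ (↑a : ℝ × ℝ) ↑b ∩ openSegment ℝ (↑p : ℝ × ℝ) ↑r = ∅ := by
  intro a b hab hs
  by_cases hA : (↑a : ℝ × ℝ) = ↑p
  · have hpb : (↑p : ℝ × ℝ) ≠ ↑b := hA ▸ adj_coe_ne hab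
    have hbr : (↑b : ℝ × ℝ) ≠ ↑r := by
      intro hB
      exact hs (by rw [Subtype.coe_injective hA, Subtype.coe_injective hB])
    rw [hA]
    exact openSegment_disj_of_cr (gp_cr hgp p.2 b.2 r.2 hpb hpr hbr)
  · by_cases hB : (↑b : ℝ × ℝ) = ↑p
    · have hpa : (↑p : ℝ × ℝ) ≠ ↑a := Ne.symm hA
      have har : (↑a : ℝ × ℝ) ≠ ↑r := by
        intro hA'
        apply hs
        rw [Subtype.coe_injective hA', Subtype.coe_injective hB]
        exact Sym2.eq_swap
      rw [hB, openSegment_symm]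
      exact openSegment_disj_of_cr (gp_cr hgp p.2 a.2 r.2 hpa hpr har)
    · exact h a b hab hA hB

lemma addEdge_adj {p r a b : P} :
    (addEdge P T p r).Adj a b ↔ T.Adj a b ∨ (s(a, b) = s(p, r) ∧ a ≠ b) := by
  unfold addEdge
  simp [SimpleGraph.fromEdgeSet_adj]

lemma addEdge_plane (hpl : IsPlaneGraph P T) {p r : P}
    (h : ∀ a b : P, T.Adj a b → s(a, b) ≠ s(p, r) →
      openSegment ℝ (↑a : ℝ × ℝ) ↑b ∩ openSegment ℝ (↑p : ℝ × ℝ) ↑r = ∅) :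
    IsPlaneGraph P (addEdge P T p r) := by
  intro a b c e hab hce hne
  rw [addEdge_adj] at hab hce
  rcases hab with hab | ⟨hab, _⟩
  · rcases hce with hce | ⟨hce, _⟩
    · exact hpl a b c e hab hce hne
    · have heq : openSegment ℝ (↑c : ℝ × ℝ) ↑e = openSegment ℝ (↑p : ℝ × ℝ) ↑r := by
        rcases Sym2.eq_iff.mp hce with ⟨h1, h2⟩ | ⟨h1, h2⟩
        · rw [h1, h2]
        · rw [h1, h2, openSegment_symm]
      rw [heq]
      exact h a b hab (fun hh => hne (hh.trans hce.symm))
  · rcases hce with hce | ⟨hce2, _⟩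
    · have heq : openSegment ℝ (↑a : ℝ × ℝ) ↑b = openSegment ℝ (↑p : ℝ × ℝ) ↑r := by
        rcases Sym2.eq_iff.mp hab with ⟨h1, h2⟩ | ⟨h1, h2⟩
        · rw [h1, h2]
        · rw [h1, h2, openSegment_symm]
      rw [heq, Set.inter_comm]
      exact h c e hce (fun hh => hne (hab.trans hh.symm))
    · exact absurd (hab.trans hce2.symm) hne

lemma visible_adj (hgp : GenPos P) (hT : IsTriangulation P T) {p r : P}
    (hpr : (↑p : ℝ × ℝ) ≠ ↑r) (hNC : NC T p ↑r) : T.Adj p r := by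
  by_contra hAdj
  have hplane := addEdge_plane hT.1 (NC_full hgp hpr hNC)
  exact hT.2 p r (fun h => hpr (by rw [h])) hAdj hplane

end Wrappers

section HalfPlane

variable {P : Finset (ℝ × ℝ)} {T : SimpleGraph P}

lemma f_combo (f : (ℝ × ℝ) →L[ℝ] ℝ) (x y : ℝ × ℝ) (t : ℝ) :
    f (x + t • (y - x)) = f x + t * (f y - f x) := by
  rw [map_add, map_smul, map_sub, smul_eq_mul]

lemma exists_visible_lower (hgp : GenPos P) (hpl : IsPlaneGraph P T) (p : P)
    (f : (ℝ × ℝ) →L[ℝ] ℝ) (c₀ : P) (hc₀ : f ↑c₀ < f ↑p) :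
    ∃ r : P, (↑r : ℝ × ℝ) ≠ ↑p ∧ f ↑r < f ↑p ∧ NC T p ↑r := by
  have hpc : (↑p : ℝ × ℝ) ≠ ↑c₀ := fun h => by rw [h] at hc₀; exact lt_irrefl _ hc₀
  rcases exists_first_crossing (T := T) hgp p c₀ hpc with
    hNC | ⟨t, a, b, ht0, ht1, hab, hap, hbp, hx', hNCx'⟩
  · exact ⟨c₀, Ne.symm hpc, hc₀, hNC⟩
  obtain ⟨hac, hbc, hprod⟩ := straddle hgp hpc (adj_coe_ne hab) hap hbp ht0 ht1 hx'
  set x' : ℝ × ℝ := (↑p : ℝ × ℝ) + t • (↑c₀ - ↑p) with hx'def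
  have hfx' : f x' < f ↑p := by
    rw [hx'def, f_combo]
    nlinarith
  obtain ⟨σ, hσ0, hσ1, hσe⟩ := mem_openSegment'.mp hx'
  have hfcombo : f x' = f ↑a + σ * (f ↑b - f ↑a) := by
    rw [hx'def] at hσe ⊢
    rw [hσe, f_combo]
  obtain ⟨w, v, hvw, hwp, hvp, hwc, hwmem, hfw⟩ :
      ∃ w v : P, T.Adj v w ∧ (↑w : ℝ × ℝ) ≠ ↑p ∧ (↑v : ℝ × ℝ) ≠ ↑p ∧
        (↑w : ℝ × ℝ) ≠ ↑c₀ ∧ x' ∈ openSegment ℝ (↑v : ℝ × ℝ) ↑w ∧ f ↑w ≤ f x' := by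
    rcases le_total (f ↑a) (f ↑b) with hle | hle
    · refine ⟨a, b, hab.symm, hap, hbp, hac, by rwa [openSegment_symm], ?_⟩
      nlinarith
    · refine ⟨b, a, hab, hbp, hap, hbc, hx', ?_⟩
      nlinarith
  have hD' : cr (↑p : ℝ × ℝ) x' ↑w ≠ 0 := by
    have hcr : cr (↑p : ℝ × ℝ) x' ↑w = t * cr (↑p : ℝ × ℝ) ↑c₀ ↑w := by
      rw [cr_swap (↑p : ℝ × ℝ) x' ↑w, hx'def, cr_param, cr_self₃,
        cr_swap (↑p : ℝ × ℝ) ↑w ↑c₀]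
      ring
    rw [hcr]
    exact mul_ne_zero (ne_of_gt ht0)
      (gp_cr hgp p.2 c₀.2 w.2 hpc (Ne.symm hwp) (Ne.symm hwc))
  obtain ⟨r, hrp, hrInT, hrNC⟩ := mrl hgp hpl p
    (Finset.univ.filter (fun r : P => InT (↑p : ℝ × ℝ) x' ↑w ↑r)).card
    x' w v hvw hvp hwp hwmem hD' hNCx' (le_refl _)
  refine ⟨r, hrp, ?_, hrNC⟩
  obtain ⟨α, β, γ, hα, hβ, hγ, hsum, heq⟩ := InT_coeffs hD' hrInT
  have hfr : f ↑r = α * f ↑p + β * f x' + γ * f ↑w := by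
    rw [heq, map_add, map_add, map_smul, map_smul, map_smul]
    simp [smul_eq_mul]
  have hβγ : 0 < β + γ := by
    rcases lt_or_ge 0 (β + γ) with h | h
    · exact h
    · exfalso
      have hβ0 : β = 0 := by linarith
      have hγ0 : γ = 0 := by linarith
      have hα1 : α = 1 := by linarith
      rw [hβ0, hγ0, hα1, one_smul, zero_smul, zero_smul, add_zero, add_zero] at heq
      exact hrp heq
  have k1 : γ * f ↑w ≤ γ * f x' := mul_le_mul_of_nonneg_left hfw hγ
  have k2 : (β + γ) * f x' < (β + γ) * f ↑p := mul_lt_mul_of_pos_left hfx' hβγ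
  have k3 : α * f ↑p + β * f ↑p + γ * f ↑p = f ↑p := by linear_combination (f ↑p) * hsum
  rw [hfr]
  nlinarith [k1, k2, k3]

end HalfPlane

section Internal

variable {P : Finset (ℝ × ℝ)} {T : SimpleGraph P}

lemma ker_collinear {f : (ℝ × ℝ) →L[ℝ] ℝ} {pp z w v : ℝ × ℝ}
    (h1 : f z = f pp) (h2 : f w = f pp) (h3 : f v ≠ f pp) : cr pp z w = 0 := by
  have hrep : ∀ q : ℝ × ℝ, f q = q.1 * f (1, 0) + q.2 * f (0, 1) := by
    intro q
    have hq : q = q.1 • ((1 : ℝ), (0 : ℝ)) + q.2 • ((0 : ℝ), (1 : ℝ)) := by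
      apply Prod.ext <;> simp
    calc f q = f (q.1 • ((1 : ℝ), (0 : ℝ)) + q.2 • ((0 : ℝ), (1 : ℝ))) := by rw [← hq]
    _ = q.1 * f (1, 0) + q.2 * f (0, 1) := by
        rw [map_add, map_smul, map_smul, smul_eq_mul, smul_eq_mul]
  set c1 := f (1, 0) with hc1
  set c2 := f (0, 1) with hc2
  have key : ∀ q : ℝ × ℝ, f q - f pp = (q.1 - pp.1) * c1 + (q.2 - pp.2) * c2 := by
    intro q
    rw [hrep q, hrep pp]
    ring
  have h1' : (z.1 - pp.1) * c1 + (z.2 - pp.2) * c2 = 0 := by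
    rw [← key z, h1]; ring
  have h2' : (w.1 - pp.1) * c1 + (w.2 - pp.2) * c2 = 0 := by
    rw [← key w, h2]; ring
  have h3' : (v.1 - pp.1) * c1 + (v.2 - pp.2) * c2 ≠ 0 := by
    rw [← key v]
    intro h
    apply h3
    linarith
  by_contra hcr
  have hidv1 : cr pp z w * (v.1 - pp.1) =
      cr pp v w * (z.1 - pp.1) + cr pp z v * (w.1 - pp.1) := by unfold cr; ring
  have hidv2 : cr pp z w * (v.2 - pp.2) =
      cr pp v w * (z.2 - pp.2) + cr pp z v * (w.2 - pp.2) := by unfold cr; ring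
  have hzero : cr pp z w * ((v.1 - pp.1) * c1 + (v.2 - pp.2) * c2) = 0 := by
    linear_combination (cr pp v w) * h1' + (cr pp z v) * h2' + c1 * hidv1 + c2 * hidv2
  rcases mul_eq_zero.mp hzero with h | h
  · exact hcr h
  · exact h3' h

end Internal

section Internal2

variable {P : Finset (ℝ × ℝ)} {T : SimpleGraph P}

lemma f_on_segment {f : (ℝ × ℝ) →L[ℝ] ℝ} {aa bb : ℝ × ℝ} (hab : f aa = f bb)
    {z : ℝ × ℝ} (hz : z ∈ segment ℝ aa bb) : f z = f aa := by
  obtain ⟨τ, _, _, rfl⟩ := mem_segment'.mp hz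
  rw [f_combo, ← hab]
  ring

lemma exists_lower_point (hgp : GenPos P) {p : P} (hint : (↑p : ℝ × ℝ) ∉ hullPoints P)
    (f : (ℝ × ℝ) →L[ℝ] ℝ) {w₀ : P} (hW : f ↑p < f ↑w₀) :
    ∃ c₀ : P, f ↑c₀ < f ↑p := by
  by_contra hno
  push_neg at hno
  obtain ⟨r₀, hr₀f, hr₀uniq⟩ : ∃ r₀ : P, f ↑r₀ = f ↑p ∧
      ∀ z : P, f ↑z = f ↑p → (↑z : ℝ × ℝ) = ↑p ∨ (↑z : ℝ × ℝ) = ↑r₀ := by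
    by_cases hexist : ∃ r₀ : P, (↑r₀ : ℝ × ℝ) ≠ ↑p ∧ f ↑r₀ = f ↑p
    · obtain ⟨r₀, hr₀p, hr₀f⟩ := hexist
      refine ⟨r₀, hr₀f, fun z hz => ?_⟩
      by_cases hzp : (↑z : ℝ × ℝ) = ↑p
      · exact Or.inl hzp
      · right
        by_contra hzr
        have hcr : cr (↑p : ℝ × ℝ) ↑z ↑r₀ = 0 :=
          ker_collinear hz hr₀f (ne_of_gt hW)
        exact gp_cr hgp p.2 z.2 r₀.2 (Ne.symm hzp) (Ne.symm hr₀p) hzr hcr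
    · refine ⟨p, rfl, fun z hz => Or.inl ?_⟩
      by_contra hzp
      exact hexist ⟨z, hzp, hz⟩
  set U : Set (ℝ × ℝ) := {z | f ↑p < f z} ∪ segment ℝ (↑p : ℝ × ℝ) ↑r₀ with hUdef
  have hfseg : ∀ z ∈ segment ℝ (↑p : ℝ × ℝ) ↑r₀, f z = f ↑p :=
    fun z hz => f_on_segment hr₀f.symm hz
  have hUconv : Convex ℝ U := by
    intro z1 hz1 z2 hz2 s1 s2 hs1 hs2 hsum
    have hfy : f (s1 • z1 + s2 • z2) = s1 * f z1 + s2 * f z2 := by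
      rw [map_add, map_smul, map_smul, smul_eq_mul, smul_eq_mul]
    rcases hz1 with hz1 | hz1 <;> rcases hz2 with hz2 | hz2
    · left
      rw [Set.mem_setOf_eq, hfy]
      rw [Set.mem_setOf_eq] at hz1 hz2
      have k3 : s1 * f ↑p + s2 * f ↑p = f ↑p := by linear_combination (f ↑p) * hsum
      rcases lt_or_eq_of_le hs1 with h1 | h1
      · have k1 : s1 * f ↑p < s1 * f z1 := mul_lt_mul_of_pos_left hz1 h1
        have k2 : s2 * f ↑p ≤ s2 * f z2 := mul_le_mul_of_nonneg_left (le_of_lt hz2) hs2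
        linarith
      · have k2 : s2 * f ↑p < s2 * f z2 := mul_lt_mul_of_pos_left hz2 (by linarith)
        have k1 : s1 * f ↑p ≤ s1 * f z1 := mul_le_mul_of_nonneg_left (le_of_lt hz1) hs1
        linarith
    · rcases eq_or_lt_of_le hs1 with h | h
      · have he : s1 • z1 + s2 • z2 = z2 := by
          rw [← h, zero_smul, zero_add, show s2 = 1 by linarith, one_smul]
        rw [he]; exact Or.inr hz2
      · left
        rw [Set.mem_setOf_eq, hfy, hfseg z2 hz2]
        rw [Set.mem_setOf_eq] at hz1
        have k3 : s1 * f ↑p + s2 * f ↑p = f ↑p := by linear_combination (f ↑p) * hsum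
        have k1 : s1 * f ↑p < s1 * f z1 := mul_lt_mul_of_pos_left hz1 h
        linarith
    · rcases eq_or_lt_of_le hs2 with h | h
      · have he : s1 • z1 + s2 • z2 = z1 := by
          rw [← h, zero_smul, add_zero, show s1 = 1 by linarith, one_smul]
        rw [he]; exact Or.inr hz1
      · left
        rw [Set.mem_setOf_eq, hfy, hfseg z1 hz1]
        rw [Set.mem_setOf_eq] at hz2
        have k3 : s1 * f ↑p + s2 * f ↑p = f ↑p := by linear_combination (f ↑p) * hsum
        have k2 : s2 * f ↑p < s2 * f z2 := mul_lt_mul_of_pos_left hz2 h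
        linarith
    · exact Or.inr ((convex_segment _ _) hz1 hz2 hs1 hs2 hsum)
  have hPU : (↑P : Set (ℝ × ℝ)) ⊆ U := by
    intro z hz
    rcases eq_or_lt_of_le (hno ⟨z, hz⟩) with heq | hlt
    · rcases hr₀uniq ⟨z, hz⟩ heq.symm with h | h
      · right
        rw [show z = ((⟨z, hz⟩ : P) : ℝ × ℝ) from rfl, h]
        exact left_mem_segment ℝ _ _
      · right
        rw [show z = ((⟨z, hz⟩ : P) : ℝ × ℝ) from rfl, h]
        exact right_mem_segment ℝ _ _
    · left; exact hlt
  have hsubU : convexHull ℝ (↑P : Set (ℝ × ℝ)) ⊆ U := convexHull_min hPU hUconv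
  have hgeq : ∀ z ∈ convexHull ℝ (↑P : Set (ℝ × ℝ)), f ↑p ≤ f z := by
    intro z hz
    rcases hsubU hz with h | h
    · exact le_of_lt h
    · exact le_of_eq (hfseg z h).symm
  apply hint
  rw [hullPoints, mem_extremePoints]
  refine ⟨subset_convexHull ℝ _ p.2, ?_⟩
  intro x1 hx1 x2 hx2 hseg
  obtain ⟨τ, hτ0, hτ1, hτe⟩ := mem_openSegment'.mp hseg
  have hfp : f (↑p : ℝ × ℝ) = f x1 + τ * (f x2 - f x1) := by
    rw [hτe, f_combo]
  have g1 := hgeq x1 hx1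
  have g2 := hgeq x2 hx2
  have hf1 : f x1 = f ↑p := by nlinarith
  have hf2 : f x2 = f ↑p := by nlinarith
  have hs1 : x1 ∈ segment ℝ (↑p : ℝ × ℝ) ↑r₀ := by
    rcases hsubU hx1 with h | h
    · exfalso; rw [Set.mem_setOf_eq, hf1] at h; exact lt_irrefl _ h
    · exact h
  have hs2 : x2 ∈ segment ℝ (↑p : ℝ × ℝ) ↑r₀ := by
    rcases hsubU hx2 with h | h
    · exfalso; rw [Set.mem_setOf_eq, hf2] at h; exact lt_irrefl _ h
    · exact h
  rcases eq_or_ne (↑r₀ : ℝ × ℝ) ↑p with hr₀p | hr₀p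
  · rw [hr₀p, segment_same] at hs1 hs2
    exact ⟨Set.mem_singleton_iff.mp hs1, Set.mem_singleton_iff.mp hs2⟩
  · obtain ⟨τ1, hτ10, hτ11, he1⟩ := mem_segment'.mp hs1
    obtain ⟨τ2, hτ20, hτ21, he2⟩ := mem_segment'.mp hs2
    have hvec1 : ((1 - τ) * τ1 + τ * τ2) * ((↑r₀ : ℝ × ℝ).1 - (↑p : ℝ × ℝ).1) = 0 := by
      have hc := congrArg Prod.fst hτe
      rw [he1, he2] at hc
      simp only [Prod.fst_add, Prod.smul_fst, Prod.fst_sub, smul_eq_mul] at hc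
      nlinarith [hc]
    have hvec2 : ((1 - τ) * τ1 + τ * τ2) * ((↑r₀ : ℝ × ℝ).2 - (↑p : ℝ × ℝ).2) = 0 := by
      have hc := congrArg Prod.snd hτe
      rw [he1, he2] at hc
      simp only [Prod.snd_add, Prod.smul_snd, Prod.snd_sub, smul_eq_mul] at hc
      nlinarith [hc]
    have hκ : (1 - τ) * τ1 + τ * τ2 = 0 := by
      rcases eq_or_ne ((↑r₀ : ℝ × ℝ).1 - (↑p : ℝ × ℝ).1) 0 with h | h
      · have h2 : ((↑r₀ : ℝ × ℝ).2 - (↑p : ℝ × ℝ).2) ≠ 0 := by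
          intro h2
          apply hr₀p
          apply Prod.ext <;> linarith
        rcases mul_eq_zero.mp hvec2 with hh | hh
        · exact hh
        · exact absurd hh h2
      · rcases mul_eq_zero.mp hvec1 with hh | hh
        · exact hh
        · exact absurd hh h
    have a1 : 0 ≤ (1 - τ) * τ1 := mul_nonneg (by linarith) hτ10
    have a2 : 0 ≤ τ * τ2 := mul_nonneg (le_of_lt hτ0) hτ20
    have b1 : (1 - τ) * τ1 = 0 := by linarith
    have b2 : τ * τ2 = 0 := by linarith
    have hτ1z : τ1 = 0 := by
      rcases mul_eq_zero.mp b1 with h | h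
      · exfalso; linarith
      · exact h
    have hτ2z : τ2 = 0 := by
      rcases mul_eq_zero.mp b2 with h | h
      · exfalso; linarith
      · exact h
    constructor
    · rw [he1, hτ1z, zero_smul, add_zero]
    · rw [he2, hτ2z, zero_smul, add_zero]

/-- main L1: an internal point with at least one neighbor lies in the convex
hull of its neighbors. -/
lemma internal_mem_hull (hgp : GenPos P) (hT : IsTriangulation P T) (p : P)
    (hint : (↑p : ℝ × ℝ) ∉ hullPoints P) (w₀ : P) (hw₀ : T.Adj p w₀) :
    (↑p : ℝ × ℝ) ∈ convexHull ℝ (Subtype.val '' (T.neighborSet p)) := by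
  by_contra hconv
  have hfin : (Subtype.val '' (T.neighborSet p)).Finite := (Set.toFinite _).image _
  obtain ⟨f, u, hfu, hall⟩ := geometric_hahn_banach_point_closed
    (convex_convexHull ℝ _) (hfin.isClosed_convexHull ℝ) hconv
  have hallN : ∀ w : P, T.Adj p w → u < f ↑w := fun w hw =>
    hall _ (subset_convexHull ℝ _ ⟨w, hw, rfl⟩)
  have hW : f ↑p < f ↑w₀ := lt_trans hfu (hallN w₀ hw₀)
  obtain ⟨c₀, hc₀⟩ := exists_lower_point hgp hint f hW
  obtain ⟨r, hrp, hfr, hrNC⟩ := exists_visible_lower hgp hT.1 p f c₀ hc₀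
  have hadj : T.Adj p r := visible_adj hgp hT (Ne.symm hrp) hrNC
  have := hallN r hadj
  nlinarith [hfu, hfr, this]

end Internal2

section TriWalk

lemma Fnonneg {X A s : ℝ} (hX : 0 < X) (hs0 : 0 ≤ s) (hs1 : s ≤ 1)
    (h : A < 0 → s ≤ X / (X - A)) : 0 ≤ (1 - s) * X + s * A := by
  rcases lt_or_ge A 0 with hA | hA
  · have hd : 0 < X - A := by linarith
    have hle := h hA
    have hkey : s * (X - A) ≤ X := by
      rw [← le_div_iff₀ hd]
      exact hle
    nlinarith
  · nlinarith [mul_nonneg hs0 hA, mul_nonneg (by linarith : (0:ℝ) ≤ 1 - s) (le_of_lt hX)]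

lemma walk_min {X1 X2 X3 A1 A2 A3 : ℝ} (h1 : 0 < X1) (h2 : 0 < X2) (h3 : 0 < X3)
    (hneg : A1 < 0 ∨ A2 < 0 ∨ A3 < 0) :
    ∃ s : ℝ, 0 < s ∧ s < 1 ∧
      ((1 - s) * X1 + s * A1 = 0 ∨ (1 - s) * X2 + s * A2 = 0 ∨ (1 - s) * X3 + s * A3 = 0) ∧
      0 ≤ (1 - s) * X1 + s * A1 ∧ 0 ≤ (1 - s) * X2 + s * A2 ∧ 0 ≤ (1 - s) * X3 + s * A3 := by
  set r1 := if A1 < 0 then X1 / (X1 - A1) else 1 with hr1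
  set r2 := if A2 < 0 then X2 / (X2 - A2) else 1 with hr2
  set r3 := if A3 < 0 then X3 / (X3 - A3) else 1 with hr3
  have key : ∀ X A : ℝ, 0 < X → 0 < (if A < 0 then X / (X - A) else 1) ∧
      (if A < 0 then X / (X - A) else 1) ≤ 1 ∧
      (A < 0 → (if A < 0 then X / (X - A) else 1) < 1) := by
    intro X A hX
    by_cases hA : A < 0
    · rw [if_pos hA]
      have hd : 0 < X - A := by linarith
      refine ⟨div_pos hX hd, ?_, fun _ => ?_⟩
      · rw [div_le_one hd]; linarith
      · rw [div_lt_one hd]; linarith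
    · rw [if_neg hA]
      exact ⟨one_pos, le_refl 1, fun h => absurd h hA⟩
  obtain ⟨hp1, hle1, hlt1⟩ := key X1 A1 h1
  obtain ⟨hp2, hle2, hlt2⟩ := key X2 A2 h2
  obtain ⟨hp3, hle3, hlt3⟩ := key X3 A3 h3
  rw [← hr1] at hp1 hle1 hlt1
  rw [← hr2] at hp2 hle2 hlt2
  rw [← hr3] at hp3 hle3 hlt3
  set s := min r1 (min r2 r3) with hs
  have hs0 : 0 < s := lt_min hp1 (lt_min hp2 hp3)
  have hsle1 : s ≤ r1 := min_le_left _ _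
  have hsle2 : s ≤ r2 := le_trans (min_le_right _ _) (min_le_left _ _)
  have hsle3 : s ≤ r3 := le_trans (min_le_right _ _) (min_le_right _ _)
  have hs1 : s < 1 := by
    rcases hneg with h | h | h
    · exact lt_of_le_of_lt hsle1 (hlt1 h)
    · exact lt_of_le_of_lt hsle2 (hlt2 h)
    · exact lt_of_le_of_lt hsle3 (hlt3 h)
  have hroot : ∀ X A : ℝ, 0 < X → A < 0 →
      (1 - X / (X - A)) * X + X / (X - A) * A = 0 := by
    intro X A hX hA
    exact root_eq (by linarith)
  have hvanish : (1 - s) * X1 + s * A1 = 0 ∨ (1 - s) * X2 + s * A2 = 0 ∨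
      (1 - s) * X3 + s * A3 = 0 := by
    have hcases : s = r1 ∨ s = r2 ∨ s = r3 := by
      rcases min_cases r1 (min r2 r3) with ⟨h, _⟩ | ⟨h, _⟩
      · exact Or.inl (hs.trans h)
      · rcases min_cases r2 r3 with ⟨h', _⟩ | ⟨h', _⟩
        · exact Or.inr (Or.inl ((hs.trans h).trans h'))
        · exact Or.inr (Or.inr ((hs.trans h).trans h'))
    rcases hcases with h | h | h
    · left
      by_cases hA : A1 < 0
      · rw [h, hr1, if_pos hA]
        exact hroot X1 A1 h1 hA
      · exfalso
        rw [h, hr1, if_neg hA] at hs1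
        exact lt_irrefl _ hs1
    · right; left
      by_cases hA : A2 < 0
      · rw [h, hr2, if_pos hA]
        exact hroot X2 A2 h2 hA
      · exfalso
        rw [h, hr2, if_neg hA] at hs1
        exact lt_irrefl _ hs1
    · right; right
      by_cases hA : A3 < 0
      · rw [h, hr3, if_pos hA]
        exact hroot X3 A3 h3 hA
      · exfalso
        rw [h, hr3, if_neg hA] at hs1
        exact lt_irrefl _ hs1
  refine ⟨s, hs0, hs1, hvanish, ?_, ?_, ?_⟩
  · refine Fnonneg h1 (le_of_lt hs0) (le_of_lt hs1) (fun hA => ?_)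
    rw [hr1, if_pos hA] at hsle1
    exact hsle1
  · refine Fnonneg h2 (le_of_lt hs0) (le_of_lt hs1) (fun hA => ?_)
    rw [hr2, if_pos hA] at hsle2
    exact hsle2
  · refine Fnonneg h3 (le_of_lt hs0) (le_of_lt hs1) (fun hA => ?_)
    rw [hr3, if_pos hA] at hsle3
    exact hsle3

lemma open_sub {uu vv x₀ : ℝ × ℝ} (hz : x₀ ∈ openSegment ℝ uu vv) :
    ∀ s : ℝ, 0 < s → s < 1 → (x₀ + s • (vv - x₀)) ∈ openSegment ℝ uu vv := by
  intro s hs0 hs1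
  obtain ⟨σ, hσ0, hσ1, hσe⟩ := mem_openSegment'.mp hz
  rw [mem_openSegment']
  refine ⟨σ + s * (1 - σ), by nlinarith, by nlinarith, ?_⟩
  rw [hσe]
  module

lemma vertex_notin_open {P : Finset (ℝ × ℝ)} (hgp : GenPos P) {u v c : P}
    (huv : (↑u : ℝ × ℝ) ≠ ↑v) (h : (↑c : ℝ × ℝ) ∈ openSegment ℝ (↑u : ℝ × ℝ) ↑v) :
    False := by
  obtain ⟨t, ht0, ht1, he⟩ := mem_openSegment'.mp h
  by_cases hcu : (↑c : ℝ × ℝ) = ↑u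
  · rw [hcu] at he
    have h1 : t * ((↑v : ℝ × ℝ).1 - (↑u : ℝ × ℝ).1) = 0 := by
      have := congrArg Prod.fst he
      simp only [Prod.fst_add, Prod.smul_fst, Prod.fst_sub, smul_eq_mul] at this
      linarith
    have h2 : t * ((↑v : ℝ × ℝ).2 - (↑u : ℝ × ℝ).2) = 0 := by
      have := congrArg Prod.snd he
      simp only [Prod.snd_add, Prod.smul_snd, Prod.snd_sub, smul_eq_mul] at this
      linarith
    apply huv
    have ha := (mul_eq_zero.mp h1).resolve_left (ne_of_gt ht0)
    have hb := (mul_eq_zero.mp h2).resolve_left (ne_of_gt ht0)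
    apply Prod.ext <;> linarith
  · by_cases hcv : (↑c : ℝ × ℝ) = ↑v
    · rw [hcv] at he
      have h1 : (1 - t) * ((↑v : ℝ × ℝ).1 - (↑u : ℝ × ℝ).1) = 0 := by
        have := congrArg Prod.fst he
        simp only [Prod.fst_add, Prod.smul_fst, Prod.fst_sub, smul_eq_mul] at this
        nlinarith [this]
      have h2 : (1 - t) * ((↑v : ℝ × ℝ).2 - (↑u : ℝ × ℝ).2) = 0 := by
        have := congrArg Prod.snd he
        simp only [Prod.snd_add, Prod.smul_snd, Prod.snd_sub, smul_eq_mul] at this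
        nlinarith [this]
      apply huv
      have ha := (mul_eq_zero.mp h1).resolve_left (by intro hh; linarith)
      have hb := (mul_eq_zero.mp h2).resolve_left (by intro hh; linarith)
      apply Prod.ext <;> linarith
    · have hcr : cr (↑u : ℝ × ℝ) ↑v ↑c = 0 := by
        rw [he, cr_param, cr_self₃, cr_self₂]
        ring
      exact gp_cr hgp u.2 v.2 c.2 huv (Ne.symm hcu) (Ne.symm hcv) hcr

lemma hit_edge {P : Finset (ℝ × ℝ)} {T : SimpleGraph P} (hgp : GenPos P)
    (hpl : IsPlaneGraph P T) {u v p y : P} (huv : T.Adj u v) (hpy : T.Adj p y)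
    (hup : (↑u : ℝ × ℝ) ≠ ↑p) (hvp : (↑v : ℝ × ℝ) ≠ ↑p)
    {z : ℝ × ℝ} (hz : z ∈ openSegment ℝ (↑u : ℝ × ℝ) ↑v)
    {α γ : ℝ} (hα : 0 ≤ α) (hγ : 0 ≤ γ) (hsum : α + γ = 1)
    (heq : z = α • (↑p : ℝ × ℝ) + γ • (↑y : ℝ × ℝ)) : False := by
  have hα1 : α = 1 - γ := by linarith
  rcases eq_or_lt_of_le hγ with hγ0 | hγ0
  · -- z = p
    have hzp : z = (↑p : ℝ × ℝ) := by
      rw [heq, ← hγ0, zero_smul, add_zero, show α = 1 by linarith, one_smul]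
    rw [hzp] at hz
    exact vertex_notin_open hgp (adj_coe_ne huv) hz
  · rcases eq_or_lt_of_le (by linarith : γ ≤ 1) with hγ1 | hγ1
    · have hzy : z = (↑y : ℝ × ℝ) := by
        rw [heq, show α = 0 by linarith, hγ1, zero_smul, zero_add, one_smul]
      rw [hzy] at hz
      exact vertex_notin_open hgp (adj_coe_ne huv) hz
    · have hzmem : z ∈ openSegment ℝ (↑p : ℝ × ℝ) ↑y := by
        rw [mem_openSegment']
        refine ⟨γ, hγ0, hγ1, ?_⟩
        rw [heq, hα1]
        module
      have hsym : s(u, v) ≠ s(p, y) := by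
        intro h
        rcases Sym2.eq_iff.mp h with ⟨h1, h2⟩ | ⟨h1, h2⟩
        · exact hup (by rw [h1])
        · exact hvp (by rw [h2])
      have hdisj := hpl u v p y huv hpy hsym
      rw [Set.eq_empty_iff_forall_notMem] at hdisj
      exact hdisj z ⟨hz, hzmem⟩

end TriWalk

section TriWalk2

variable {P : Finset (ℝ × ℝ)} {T : SimpleGraph P}

lemma walk_helper (hgp : GenPos P) (hpl : IsPlaneGraph P T) {p q a : P}
    (hpq : T.Adj p q) (hpa : T.Adj p a)
    {u v : P} (huv : T.Adj u v) (hup : (↑u : ℝ × ℝ) ≠ ↑p) (hvp : (↑v : ℝ × ℝ) ≠ ↑p)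
    {x₀ : ℝ × ℝ} (hx₀uv : x₀ ∈ openSegment ℝ (↑u : ℝ × ℝ) ↑v)
    {D : ℝ} (hD : D ≠ 0)
    (hgE1 : ∀ s : ℝ, cr (x₀ + s • ((↑v : ℝ × ℝ) - x₀)) ↑q ↑a
      = (1 - s) * cr x₀ ↑q ↑a + s * cr (↑v : ℝ × ℝ) ↑q ↑a)
    (hgE2 : ∀ s : ℝ, cr (↑p : ℝ × ℝ) (x₀ + s • ((↑v : ℝ × ℝ) - x₀)) ↑a
      = (1 - s) * cr (↑p : ℝ × ℝ) x₀ ↑a + s * cr (↑p : ℝ × ℝ) ↑v ↑a)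
    (hgE3 : ∀ s : ℝ, cr (↑p : ℝ × ℝ) ↑q (x₀ + s • ((↑v : ℝ × ℝ) - x₀))
      = (1 - s) * cr (↑p : ℝ × ℝ) ↑q x₀ + s * cr (↑p : ℝ × ℝ) ↑q ↑v)
    (hX1 : 0 < cr x₀ ↑q ↑a * D) (hX2 : 0 < cr (↑p : ℝ × ℝ) x₀ ↑a * D)
    (hX3 : 0 < cr (↑p : ℝ × ℝ) ↑q x₀ * D)
    (hsum : ∀ z : ℝ × ℝ, cr z ↑q ↑a + cr (↑p : ℝ × ℝ) z ↑a + cr (↑p : ℝ × ℝ) ↑q z = D)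
    (hbary : ∀ z : ℝ × ℝ, z = (cr z ↑q ↑a / D) • (↑p : ℝ × ℝ) +
      (cr (↑p : ℝ × ℝ) z ↑a / D) • (↑q : ℝ × ℝ) + (cr (↑p : ℝ × ℝ) ↑q z / D) • (↑a : ℝ × ℝ))
    (hneg : cr (↑v : ℝ × ℝ) ↑q ↑a * D < 0 ∨ cr (↑p : ℝ × ℝ) ↑v ↑a * D < 0 ∨
      cr (↑p : ℝ × ℝ) ↑q ↑v * D < 0) :
    ∃ s : ℝ, 0 < s ∧ s ≤ 1 ∧ cr (x₀ + s • ((↑v : ℝ × ℝ) - x₀)) ↑q ↑a = 0 := by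
  obtain ⟨s, hs0, hs1, hvan, hn1, hn2, hn3⟩ := walk_min hX1 hX2 hX3 hneg
  set z : ℝ × ℝ := x₀ + s • ((↑v : ℝ × ℝ) - x₀) with hzdef
  have hp1 : cr z ↑q ↑a * D
      = (1 - s) * (cr x₀ ↑q ↑a * D) + s * (cr (↑v : ℝ × ℝ) ↑q ↑a * D) := by
    rw [hzdef, hgE1 s]; ring
  have hp2 : cr (↑p : ℝ × ℝ) z ↑a * D
      = (1 - s) * (cr (↑p : ℝ × ℝ) x₀ ↑a * D) + s * (cr (↑p : ℝ × ℝ) ↑v ↑a * D) := by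
    rw [hzdef, hgE2 s]; ring
  have hp3 : cr (↑p : ℝ × ℝ) ↑q z * D
      = (1 - s) * (cr (↑p : ℝ × ℝ) ↑q x₀ * D) + s * (cr (↑p : ℝ × ℝ) ↑q ↑v * D) := by
    rw [hzdef, hgE3 s]; ring
  have hzmem : z ∈ openSegment ℝ (↑u : ℝ × ℝ) ↑v := open_sub hx₀uv s hs0 hs1
  rcases hvan with h | h | h
  · exact ⟨s, hs0, le_of_lt hs1, (mul_eq_zero.mp (hp1.trans h)).resolve_right hD⟩
  · exfalso
    have hmid : cr (↑p : ℝ × ℝ) z ↑a = 0 := (mul_eq_zero.mp (hp2.trans h)).resolve_right hD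
    have hα : 0 ≤ cr z ↑q ↑a / D := prodsign_div_nonneg hD (by rw [hp1]; exact hn1)
    have hγ : 0 ≤ cr (↑p : ℝ × ℝ) ↑q z / D := prodsign_div_nonneg hD (by rw [hp3]; exact hn3)
    have hsum' : cr z ↑q ↑a / D + cr (↑p : ℝ × ℝ) ↑q z / D = 1 := by
      have := hsum z
      field_simp
      linarith
    have hb := hbary z
    rw [hmid, zero_div, zero_smul, add_zero] at hb
    exact hit_edge hgp hpl huv hpa hup hvp hzmem hα hγ hsum' hb
  · exfalso
    have hmid : cr (↑p : ℝ × ℝ) ↑q z = 0 := (mul_eq_zero.mp (hp3.trans h)).resolve_right hD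
    have hα : 0 ≤ cr z ↑q ↑a / D := prodsign_div_nonneg hD (by rw [hp1]; exact hn1)
    have hβ : 0 ≤ cr (↑p : ℝ × ℝ) z ↑a / D := prodsign_div_nonneg hD (by rw [hp2]; exact hn2)
    have hsum' : cr z ↑q ↑a / D + cr (↑p : ℝ × ℝ) z ↑a / D = 1 := by
      have := hsum z
      field_simp
      linarith
    have hb := hbary z
    rw [hmid, zero_div, zero_smul, add_zero] at hb
    exact hit_edge hgp hpl huv hpq hup hvp hzmem hα hβ hsum' hb

lemma tri_walk (hgp : GenPos P) (hpl : IsPlaneGraph P T) {p q a : P}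
    (hpq : T.Adj p q) (hpa : T.Adj p a) (hqa : (↑q : ℝ × ℝ) ≠ ↑a)
    {u v : P} (huv : T.Adj u v) (hup : (↑u : ℝ × ℝ) ≠ ↑p) (hvp : (↑v : ℝ × ℝ) ≠ ↑p)
    {x₀ : ℝ × ℝ} (hx₀ : InTS ↑p ↑q ↑a x₀)
    (hx₀uv : x₀ ∈ openSegment ℝ (↑u : ℝ × ℝ) ↑v) :
    InTS ↑p ↑q ↑a ↑v ∨
      ∃ s : ℝ, 0 < s ∧ s ≤ 1 ∧ cr (x₀ + s • ((↑v : ℝ × ℝ) - x₀)) ↑q ↑a = 0 := by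
  set D := cr (↑p : ℝ × ℝ) ↑q ↑a with hDdef
  have hD : D ≠ 0 :=
    gp_cr hgp p.2 q.2 a.2 (adj_coe_ne hpq) (adj_coe_ne hpa) hqa
  have hgE1 : ∀ s : ℝ, cr (x₀ + s • ((↑v : ℝ × ℝ) - x₀)) ↑q ↑a
      = (1 - s) * cr x₀ ↑q ↑a + s * cr (↑v : ℝ × ℝ) ↑q ↑a := by
    intro s
    rw [cr_cyc _ (↑q : ℝ × ℝ) ↑a, cr_param, ← cr_cyc x₀ (↑q : ℝ × ℝ) ↑a,
      ← cr_cyc (↑v : ℝ × ℝ) (↑q : ℝ × ℝ) ↑a]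
  have hgE2 : ∀ s : ℝ, cr (↑p : ℝ × ℝ) (x₀ + s • ((↑v : ℝ × ℝ) - x₀)) ↑a
      = (1 - s) * cr (↑p : ℝ × ℝ) x₀ ↑a + s * cr (↑p : ℝ × ℝ) ↑v ↑a := by
    intro s
    rw [← cr_cyc (↑a : ℝ × ℝ) ↑p _, cr_param, cr_cyc (↑a : ℝ × ℝ) ↑p x₀,
      cr_cyc (↑a : ℝ × ℝ) ↑p ↑v]
  have hgE3 : ∀ s : ℝ, cr (↑p : ℝ × ℝ) ↑q (x₀ + s • ((↑v : ℝ × ℝ) - x₀))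
      = (1 - s) * cr (↑p : ℝ × ℝ) ↑q x₀ + s * cr (↑p : ℝ × ℝ) ↑q ↑v := by
    intro s
    rw [cr_param]
  have hsum : ∀ z : ℝ × ℝ, cr z ↑q ↑a + cr (↑p : ℝ × ℝ) z ↑a + cr (↑p : ℝ × ℝ) ↑q z = D :=
    fun z => cr_sum _ _ _ _
  have hbary : ∀ z : ℝ × ℝ, z = (cr z ↑q ↑a / D) • (↑p : ℝ × ℝ) +
      (cr (↑p : ℝ × ℝ) z ↑a / D) • (↑q : ℝ × ℝ) + (cr (↑p : ℝ × ℝ) ↑q z / D) • (↑a : ℝ × ℝ) :=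
    fun z => cr_bary z hD
  obtain ⟨hX1, hX2, hX3⟩ := hx₀
  by_cases hv1 : 0 ≤ cr (↑v : ℝ × ℝ) ↑q ↑a * D
  · by_cases hv2 : 0 ≤ cr (↑p : ℝ × ℝ) ↑v ↑a * D
    · by_cases hv3 : 0 ≤ cr (↑p : ℝ × ℝ) ↑q ↑v * D
      · by_cases hvq : (↑v : ℝ × ℝ) = ↑q
        · right
          refine ⟨1, one_pos, le_refl 1, ?_⟩
          have h : x₀ + (1 : ℝ) • ((↑v : ℝ × ℝ) - x₀) = ↑v := by module
          rw [h, hvq]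
          exact cr_self₁ _ _
        · by_cases hva : (↑v : ℝ × ℝ) = ↑a
          · right
            refine ⟨1, one_pos, le_refl 1, ?_⟩
            have h : x₀ + (1 : ℝ) • ((↑v : ℝ × ℝ) - x₀) = ↑v := by module
            rw [h, hva]
            exact cr_self₃ _ _
          · left
            have h1ne : cr (↑v : ℝ × ℝ) ↑q ↑a ≠ 0 :=
              gp_cr hgp v.2 q.2 a.2 hvq hva hqa
            have h2ne : cr (↑p : ℝ × ℝ) ↑v ↑a ≠ 0 :=
              gp_cr hgp p.2 v.2 a.2 (Ne.symm hvp) (adj_coe_ne hpa) hva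
            have h3ne : cr (↑p : ℝ × ℝ) ↑q ↑v ≠ 0 :=
              gp_cr hgp p.2 q.2 v.2 (adj_coe_ne hpq) (Ne.symm hvp) (Ne.symm hvq)
            exact ⟨lt_of_le_of_ne hv1 (Ne.symm (mul_ne_zero h1ne hD)),
              lt_of_le_of_ne hv2 (Ne.symm (mul_ne_zero h2ne hD)),
              lt_of_le_of_ne hv3 (Ne.symm (mul_ne_zero h3ne hD))⟩
      · exact Or.inr (walk_helper hgp hpl hpq hpa huv hup hvp hx₀uv hD hgE1 hgE2 hgE3
          hX1 hX2 hX3 hsum hbary (Or.inr (Or.inr (lt_of_not_ge hv3))))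
    · exact Or.inr (walk_helper hgp hpl hpq hpa huv hup hvp hx₀uv hD hgE1 hgE2 hgE3
        hX1 hX2 hX3 hsum hbary (Or.inr (Or.inl (lt_of_not_ge hv2))))
  · exact Or.inr (walk_helper hgp hpl hpq hpa huv hup hvp hx₀uv hD hgE1 hgE2 hgE3
      hX1 hX2 hX3 hsum hbary (Or.inl (lt_of_not_ge hv1)))

lemma triEscape (hgp : GenPos P) (hpl : IsPlaneGraph P T) {p q a : P}
    (hpq : T.Adj p q) (hpa : T.Adj p a) (hqa : (↑q : ℝ × ℝ) ≠ ↑a)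
    {u v : P} (huv : T.Adj u v) (hup : (↑u : ℝ × ℝ) ≠ ↑p) (hvp : (↑v : ℝ × ℝ) ≠ ↑p)
    {x₀ : ℝ × ℝ} (hx₀ : InTS ↑p ↑q ↑a x₀)
    (hx₀uv : x₀ ∈ openSegment ℝ (↑u : ℝ × ℝ) ↑v) :
    ∃ w w' : P, ((w = u ∧ w' = v) ∨ (w = v ∧ w' = u)) ∧ InTS ↑p ↑q ↑a ↑w := by
  rcases tri_walk hgp hpl hpq hpa hqa huv hup hvp hx₀ hx₀uv with hInT | ⟨sv, hsv0, hsv1, hEv⟩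
  · exact ⟨v, u, Or.inr ⟨rfl, rfl⟩, hInT⟩
  have hx₀vu : x₀ ∈ openSegment ℝ (↑v : ℝ × ℝ) ↑u := by
    rw [openSegment_symm]; exact hx₀uv
  rcases tri_walk hgp hpl hpq hpa hqa huv.symm hvp hup hx₀ hx₀vu with hInT | ⟨su, hsu0, hsu1, hEu⟩
  · exact ⟨u, v, Or.inl ⟨rfl, rfl⟩, hInT⟩
  exfalso
  set D := cr (↑p : ℝ × ℝ) ↑q ↑a with hDdef
  have hD : D ≠ 0 :=
    gp_cr hgp p.2 q.2 a.2 (adj_coe_ne hpq) (adj_coe_ne hpa) hqa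
  have hK : cr x₀ ↑q ↑a ≠ 0 := by
    intro h
    have := hx₀.1
    rw [h] at this
    nlinarith
  set K := cr x₀ ↑q ↑a with hKdef
  set CU := cr (↑u : ℝ × ℝ) ↑q ↑a with hCU
  set CV := cr (↑v : ℝ × ℝ) ↑q ↑a with hCV
  have hgen : ∀ (w : ℝ × ℝ) (s : ℝ), cr (x₀ + s • (w - x₀)) ↑q ↑a
      = (1 - s) * cr x₀ ↑q ↑a + s * cr w ↑q ↑a := by
    intro w s
    rw [cr_cyc _ (↑q : ℝ × ℝ) ↑a, cr_param, ← cr_cyc x₀ (↑q : ℝ × ℝ) ↑a,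
      ← cr_cyc w (↑q : ℝ × ℝ) ↑a]
  have he_v : (1 - sv) * K + sv * CV = 0 := by
    rw [hKdef, hCV, ← hgen (↑v : ℝ × ℝ) sv]
    exact hEv
  have he_u : (1 - su) * K + su * CU = 0 := by
    rw [hKdef, hCU, ← hgen (↑u : ℝ × ℝ) su]
    exact hEu
  obtain ⟨σ, hσ0, hσ1, hσe⟩ := mem_openSegment'.mp hx₀uv
  have he3 : K = (1 - σ) * CU + σ * CV := by
    rw [hKdef, hCU, hCV, hσe, cr_cyc _ (↑q : ℝ × ℝ) ↑a, cr_param,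
      ← cr_cyc (↑u : ℝ × ℝ) (↑q : ℝ × ℝ) ↑a, ← cr_cyc (↑v : ℝ × ℝ) (↑q : ℝ × ℝ) ↑a]
  have key : K * ((1 - σ) * sv + σ * su) = 0 := by
    linear_combination ((1 - σ) * sv) * he_u + (σ * su) * he_v + (su * sv) * he3
  rcases mul_eq_zero.mp key with h | h
  · exact hK h
  · nlinarith

end TriWalk2

section EmptyTri

variable {P : Finset (ℝ × ℝ)} {T : SimpleGraph P}

lemma cr_of_mem_openSegment {x y z : ℝ × ℝ} (h : z ∈ openSegment ℝ x y) :
    cr x y z = 0 := by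
  obtain ⟨t, _, _, rfl⟩ := mem_openSegment'.mp h
  rw [cr_param, cr_self₃, cr_self₂]
  ring

lemma not_inTS_q {p q a : ℝ × ℝ} : ¬ InTS p q a q := by
  intro h
  have := h.1
  rw [cr_self₁] at this
  nlinarith

lemma not_inTS_a {p q a : ℝ × ℝ} : ¬ InTS p q a a := by
  intro h
  have := h.2.1
  rw [cr_self₂] at this
  nlinarith

lemma not_inTS_p {p q a : ℝ × ℝ} : ¬ InTS p q a p := by
  intro h
  have := h.2.1
  rw [cr_self₁] at this
  nlinarith

lemma both_int_contra {p q a b : ℝ × ℝ}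
    (hPint : InTS q a b p) (hbint : InTS p q a b) : False := by
  have hD : cr p q a ≠ 0 := InTS_ne hbint
  obtain ⟨α₁, β₁, γ₁, hα₁, hβ₁, hγ₁, hs₁, he₁⟩ := InTS_coeffs hbint
  obtain ⟨α₂, β₂, γ₂, hα₂, hβ₂, hγ₂, hs₂, he₂⟩ := InTS_coeffs hPint
  have hα₁e : α₁ = 1 - β₁ - γ₁ := by linarith
  have hα₂e : α₂ = 1 - β₂ - γ₂ := by linarith
  have E1x : b.1 = (1 - β₁ - γ₁) * p.1 + β₁ * q.1 + γ₁ * a.1 := by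
    have := congrArg Prod.fst he₁
    simp only [Prod.fst_add, Prod.smul_fst, smul_eq_mul] at this
    rw [hα₁e] at this
    linarith
  have E1y : b.2 = (1 - β₁ - γ₁) * p.2 + β₁ * q.2 + γ₁ * a.2 := by
    have := congrArg Prod.snd he₁
    simp only [Prod.snd_add, Prod.smul_snd, smul_eq_mul] at this
    rw [hα₁e] at this
    linarith
  have E2x : p.1 = (1 - β₂ - γ₂) * q.1 + β₂ * a.1 + γ₂ * b.1 := by
    have := congrArg Prod.fst he₂
    simp only [Prod.fst_add, Prod.smul_fst, smul_eq_mul] at this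
    rw [hα₂e] at this
    linarith
  have E2y : p.2 = (1 - β₂ - γ₂) * q.2 + β₂ * a.2 + γ₂ * b.2 := by
    have := congrArg Prod.snd he₂
    simp only [Prod.snd_add, Prod.smul_snd, smul_eq_mul] at this
    rw [hα₂e] at this
    linarith
  set c1 := (1 - β₂ - γ₂) + γ₂ * β₁ with hc1def
  set c2 := β₂ + γ₂ * γ₁ with hc2def
  have hc1 : 0 < c1 := by
    rw [hc1def]
    nlinarith
  have kx : c1 * (q.1 - p.1) + c2 * (a.1 - p.1) = 0 := by
    rw [hc1def, hc2def]
    linear_combination (-1) * E2x - γ₂ * E1x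
  have ky : c1 * (q.2 - p.2) + c2 * (a.2 - p.2) = 0 := by
    rw [hc1def, hc2def]
    linear_combination (-1) * E2y - γ₂ * E1y
  have hfinal : cr p q a * c1 = 0 := by
    unfold cr
    linear_combination (a.2 - p.2) * kx - (a.1 - p.1) * ky
  rcases mul_eq_zero.mp hfinal with h | h
  · exact hD h
  · linarith

lemma combo_pos {α β γ A X Y : ℝ} (hα : 0 ≤ α) (hA : 0 ≤ A) (hβ : 0 ≤ β) (hγ : 0 ≤ γ)
    (hX : 0 < X) (hY : 0 < Y) (hβγ : 0 < β + γ) : 0 < α * A + β * X + γ * Y := by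
  rcases lt_or_eq_of_le hβ with h | h
  · nlinarith [mul_nonneg hα hA, mul_pos h hX, mul_nonneg hγ (le_of_lt hY)]
  · have hγ0 : 0 < γ := by linarith
    nlinarith [mul_nonneg hα hA, mul_pos hγ0 hY]

lemma empty_tri (hgp : GenPos P) (hT : IsTriangulation P T) {p q a b : P}
    (hpq : T.Adj p q) (hpa : T.Adj p a) (hqa : (↑q : ℝ × ℝ) ≠ ↑a)
    (hNb : ∀ w : P, T.Adj p w → (↑w : ℝ × ℝ) = ↑q ∨ (↑w : ℝ × ℝ) = ↑a ∨ (↑w : ℝ × ℝ) = ↑b)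
    (hPint : InTS ↑q ↑a ↑b ↑p) :
    ∀ c : P, ¬ InTS ↑p ↑q ↑a ↑c := by
  have hpl := hT.1
  have hnotvis : ∀ r : P, (↑r : ℝ × ℝ) ≠ ↑p → InTS ↑p ↑q ↑a ↑r → NC T p ↑r → False := by
    intro r hrp hrint hrNC
    have hadj : T.Adj p r := visible_adj hgp hT (Ne.symm hrp) hrNC
    rcases hNb r hadj with h | h | h
    · rw [h] at hrint; exact not_inTS_q hrint
    · rw [h] at hrint; exact not_inTS_a hrint
    · rw [h] at hrint; exact both_int_contra hPint hrint
  intro c hc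
  have hcp : (↑c : ℝ × ℝ) ≠ ↑p := by
    intro h; rw [h] at hc; exact not_inTS_p hc
  rcases exists_first_crossing (T := T) hgp p c (Ne.symm hcp) with
    hNC | ⟨t, u, v, ht0, ht1, huv, hup, hvp, hx', hNCx'⟩
  · exact hnotvis c hcp hc hNC
  obtain ⟨huc, hvc, hprod⟩ := straddle hgp (Ne.symm hcp) (adj_coe_ne huv) hup hvp ht0 ht1 hx'
  set x₀ : ℝ × ℝ := (↑p : ℝ × ℝ) + t • (↑c - ↑p) with hx₀def
  set D := cr (↑p : ℝ × ℝ) ↑q ↑a with hDdef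
  have hD : D ≠ 0 := gp_cr hgp p.2 q.2 a.2 (adj_coe_ne hpq) (adj_coe_ne hpa) hqa
  have hDD : 0 < D * D := mul_self_pos.mpr hD
  obtain ⟨hcc1, hcc2, hcc3⟩ := hc
  have hx₀int : InTS ↑p ↑q ↑a x₀ := by
    have h1 : cr x₀ ↑q ↑a = (1 - t) * cr (↑p : ℝ × ℝ) ↑q ↑a + t * cr (↑c : ℝ × ℝ) ↑q ↑a := by
      rw [hx₀def, cr_cyc _ (↑q : ℝ × ℝ) ↑a, cr_param, ← cr_cyc (↑p : ℝ × ℝ) (↑q : ℝ × ℝ) ↑a,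
        ← cr_cyc (↑c : ℝ × ℝ) (↑q : ℝ × ℝ) ↑a]
    have h2 : cr (↑p : ℝ × ℝ) x₀ ↑a = t * cr (↑p : ℝ × ℝ) ↑c ↑a := by
      rw [hx₀def, ← cr_cyc (↑a : ℝ × ℝ) ↑p _, cr_param, cr_self₂,
        cr_cyc (↑a : ℝ × ℝ) ↑p ↑c]
      ring
    have h3 : cr (↑p : ℝ × ℝ) ↑q x₀ = t * cr (↑p : ℝ × ℝ) ↑q ↑c := by
      rw [hx₀def, cr_param, cr_self₃]
      ring
    refine ⟨?_, ?_, ?_⟩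
    · rw [h1]
      have k := mul_pos ht0 hcc1
      nlinarith
    · rw [h2]
      have k := mul_pos ht0 hcc2
      nlinarith
    · rw [h3]
      have k := mul_pos ht0 hcc3
      nlinarith
  obtain ⟨w, w', hcase, hwint⟩ := triEscape hgp hpl hpq hpa hqa huv hup hvp hx₀int hx'
  have hw'w : T.Adj w' w := by
    rcases hcase with ⟨h1, h2⟩ | ⟨h1, h2⟩
    · rw [h1, h2]; exact huv.symm
    · rw [h1, h2]; exact huv
  have hwp : (↑w : ℝ × ℝ) ≠ ↑p := by
    rcases hcase with ⟨h1, _⟩ | ⟨h1, _⟩ <;> rw [h1]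
    · exact hup
    · exact hvp
  have hw'p : (↑w' : ℝ × ℝ) ≠ ↑p := by
    rcases hcase with ⟨_, h2⟩ | ⟨_, h2⟩ <;> rw [h2]
    · exact hvp
    · exact hup
  have hwc : (↑w : ℝ × ℝ) ≠ ↑c := by
    rcases hcase with ⟨h1, _⟩ | ⟨h1, _⟩ <;> rw [h1]
    · exact huc
    · exact hvc
  have hx₀w : x₀ ∈ openSegment ℝ (↑w' : ℝ × ℝ) ↑w := by
    rcases hcase with ⟨h1, h2⟩ | ⟨h1, h2⟩ <;> rw [h1, h2]
    · rw [openSegment_symm]; exact hx'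
    · exact hx'
  have hDx : cr (↑p : ℝ × ℝ) x₀ ↑w ≠ 0 := by
    have hcr : cr (↑p : ℝ × ℝ) x₀ ↑w = t * cr (↑p : ℝ × ℝ) ↑c ↑w := by
      rw [cr_swap (↑p : ℝ × ℝ) x₀ ↑w, hx₀def, cr_param, cr_self₃,
        cr_swap (↑p : ℝ × ℝ) ↑w ↑c]
      ring
    rw [hcr]
    exact mul_ne_zero (ne_of_gt ht0)
      (gp_cr hgp p.2 c.2 w.2 (Ne.symm hcp) (Ne.symm hwp) (Ne.symm hwc))
  obtain ⟨r, hrp, hrInT, hrNC⟩ := mrl hgp hpl p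
    (Finset.univ.filter (fun r : P => InT (↑p : ℝ × ℝ) x₀ ↑w ↑r)).card
    x₀ w w' hw'w hw'p hwp hx₀w hDx hNCx' (le_refl _)
  have hrint : InTS ↑p ↑q ↑a ↑r := by
    obtain ⟨α, β, γ, hα, hβ, hγ, hsum, heq⟩ := InT_coeffs hDx hrInT
    have hβγ : 0 < β + γ := by
      rcases lt_or_ge 0 (β + γ) with h | h
      · exact h
      · exfalso
        have hβ0 : β = 0 := by linarith
        have hγ0 : γ = 0 := by linarith
        have hα1 : α = 1 := by linarith
        rw [hβ0, hγ0, hα1, one_smul, zero_smul, zero_smul, add_zero, add_zero] at heq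
        exact hrp heq
    obtain ⟨hx1, hx2, hx3⟩ := hx₀int
    obtain ⟨hw1, hw2, hw3⟩ := hwint
    have e1 : cr (↑r : ℝ × ℝ) ↑q ↑a
        = α * cr (↑p : ℝ × ℝ) ↑q ↑a + β * cr x₀ ↑q ↑a + γ * cr (↑w : ℝ × ℝ) ↑q ↑a := by
      rw [cr_cyc _ (↑q : ℝ × ℝ) ↑a, heq, cr_combo3 _ _ _ _ _ α β γ hsum,
        ← cr_cyc (↑p : ℝ × ℝ) (↑q : ℝ × ℝ) ↑a, ← cr_cyc x₀ (↑q : ℝ × ℝ) ↑a,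
        ← cr_cyc (↑w : ℝ × ℝ) (↑q : ℝ × ℝ) ↑a]
    have e2 : cr (↑p : ℝ × ℝ) ↑r ↑a
        = β * cr (↑p : ℝ × ℝ) x₀ ↑a + γ * cr (↑p : ℝ × ℝ) ↑w ↑a := by
      rw [← cr_cyc (↑a : ℝ × ℝ) ↑p _, heq, cr_combo3 _ _ _ _ _ α β γ hsum, cr_self₂,
        cr_cyc (↑a : ℝ × ℝ) ↑p x₀, cr_cyc (↑a : ℝ × ℝ) ↑p ↑w]
      ring
    have e3 : cr (↑p : ℝ × ℝ) ↑q ↑r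
        = α * cr (↑p : ℝ × ℝ) ↑q ↑p + β * cr (↑p : ℝ × ℝ) ↑q x₀ + γ * cr (↑p : ℝ × ℝ) ↑q ↑w := by
      rw [heq, cr_combo3 _ _ _ _ _ α β γ hsum]
    refine ⟨?_, ?_, ?_⟩
    · rw [e1]
      have expand : (α * cr (↑p : ℝ × ℝ) ↑q ↑a + β * cr x₀ ↑q ↑a + γ * cr (↑w : ℝ × ℝ) ↑q ↑a) * D
          = α * (D * D) + β * (cr x₀ ↑q ↑a * D) + γ * (cr (↑w : ℝ × ℝ) ↑q ↑a * D) := by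
        rw [hDdef]; ring
      rw [expand]
      exact combo_pos hα (le_of_lt hDD) hβ hγ hx1 hw1 hβγ
    · rw [e2]
      have expand : (β * cr (↑p : ℝ × ℝ) x₀ ↑a + γ * cr (↑p : ℝ × ℝ) ↑w ↑a) * D
          = 0 * 0 + β * (cr (↑p : ℝ × ℝ) x₀ ↑a * D) + γ * (cr (↑p : ℝ × ℝ) ↑w ↑a * D) := by
        ring
      rw [expand]
      exact combo_pos (le_refl 0) (le_refl 0) hβ hγ hx2 hw2 hβγ
    · rw [e3, cr_self₃]
      have expand : (α * 0 + β * cr (↑p : ℝ × ℝ) ↑q x₀ + γ * cr (↑p : ℝ × ℝ) ↑q ↑w) * D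
          = α * 0 + β * (cr (↑p : ℝ × ℝ) ↑q x₀ * D) + γ * (cr (↑p : ℝ × ℝ) ↑q ↑w * D) := by
        ring
      rw [expand]
      exact combo_pos hα (le_refl 0) hβ hγ hx3 hw3 hβγ
  exact hnotvis r hrp hrint hrNC

end EmptyTri

section LinkAdj

variable {P : Finset (ℝ × ℝ)} {T : SimpleGraph P}

lemma pb_disj {pp bb qq aa : ℝ × ℝ} (hsign : 0 < cr qq aa pp * cr qq aa bb) :
    openSegment ℝ pp bb ∩ openSegment ℝ qq aa = ∅ := by
  rw [Set.eq_empty_iff_forall_notMem]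
  rintro z ⟨hz1, hz2⟩
  have hz2' : cr qq aa z = 0 := cr_of_mem_openSegment hz2
  obtain ⟨η, hη0, hη1, he⟩ := mem_openSegment'.mp hz1
  have hcqa : cr qq aa z = (1 - η) * cr qq aa pp + η * cr qq aa bb := by
    rw [he, cr_param]
  have hc0 : (1 - η) * cr qq aa pp + η * cr qq aa bb = 0 := by
    rw [← hcqa]; exact hz2'
  have hB : cr qq aa bb ≠ 0 := by intro h; rw [h] at hsign; nlinarith
  have k1 : 0 < (1 - η) * (cr qq aa pp * cr qq aa bb) := mul_pos (by linarith) hsign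
  have k2 : 0 < η * (cr qq aa bb * cr qq aa bb) := mul_pos hη0 (mul_self_pos.mpr hB)
  have hc0' : (1 - η) * (cr qq aa pp * cr qq aa bb) + η * (cr qq aa bb * cr qq aa bb) = 0 := by
    linear_combination (cr qq aa bb) * hc0
  linarith

lemma link_adj (hgp : GenPos P) (hT : IsTriangulation P T) {p q a b : P}
    (hpq : T.Adj p q) (hpa : T.Adj p a) (hqa : (↑q : ℝ × ℝ) ≠ ↑a)
    (hNb : ∀ w : P, T.Adj p w → (↑w : ℝ × ℝ) = ↑q ∨ (↑w : ℝ × ℝ) = ↑a ∨ (↑w : ℝ × ℝ) = ↑b)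
    (hPint : InTS ↑q ↑a ↑b ↑p) :
    T.Adj q a := by
  have hpl := hT.1
  have hempty := empty_tri hgp hT hpq hpa hqa hNb hPint
  set D := cr (↑p : ℝ × ℝ) ↑q ↑a with hDdef
  have hD : D ≠ 0 := gp_cr hgp p.2 q.2 a.2 (adj_coe_ne hpq) (adj_coe_ne hpa) hqa
  have hDD : 0 < D * D := mul_self_pos.mpr hD
  have hsignP : 0 < cr (↑q : ℝ × ℝ) ↑a ↑p * cr (↑q : ℝ × ℝ) ↑a ↑b := hPint.2.2
  have hCP : cr (↑q : ℝ × ℝ) ↑a ↑p ≠ 0 := by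
    intro h; rw [h] at hsignP; nlinarith
  by_contra hnadj
  apply hT.2 q a (fun h => hqa (by rw [h])) hnadj
  apply addEdge_plane hpl
  intro u v huv hs
  by_cases huq : (↑u : ℝ × ℝ) = ↑q
  · rw [huq]
    refine openSegment_disj_of_cr (gp_cr hgp q.2 v.2 a.2 (huq ▸ adj_coe_ne huv) hqa ?_)
    intro hva
    apply hs
    rw [Subtype.coe_injective huq, Subtype.coe_injective hva]
  by_cases hvq : (↑v : ℝ × ℝ) = ↑q
  · rw [hvq, openSegment_symm ℝ (↑u : ℝ × ℝ) (↑q : ℝ × ℝ)]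
    refine openSegment_disj_of_cr (gp_cr hgp q.2 u.2 a.2 ?_ hqa ?_)
    · rw [← hvq]; exact (adj_coe_ne huv).symm
    · intro hua
      apply hs
      rw [Subtype.coe_injective hua, Subtype.coe_injective hvq]
      exact Sym2.eq_swap
  by_cases hua : (↑u : ℝ × ℝ) = ↑a
  · rw [hua, show openSegment ℝ (↑q : ℝ × ℝ) ↑a = openSegment ℝ (↑a : ℝ × ℝ) ↑q from
      openSegment_symm ℝ _ _]
    exact openSegment_disj_of_cr
      (gp_cr hgp a.2 v.2 q.2 (hua ▸ adj_coe_ne huv) (Ne.symm hqa) hvq)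
  by_cases hva : (↑v : ℝ × ℝ) = ↑a
  · rw [hva, openSegment_symm ℝ (↑u : ℝ × ℝ) (↑a : ℝ × ℝ),
      show openSegment ℝ (↑q : ℝ × ℝ) ↑a = openSegment ℝ (↑a : ℝ × ℝ) ↑q from
      openSegment_symm ℝ _ _]
    refine openSegment_disj_of_cr (gp_cr hgp a.2 u.2 q.2 ?_ (Ne.symm hqa) huq)
    rw [← hva]; exact (adj_coe_ne huv).symm
  by_cases hup : (↑u : ℝ × ℝ) = ↑p
  · have hpv : T.Adj p v := by
      have h : u = p := Subtype.coe_injective hup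
      rwa [h] at huv
    rcases hNb v hpv with h | h | h
    · exact absurd h hvq
    · exact absurd h hva
    · rw [hup, h]
      exact pb_disj hsignP
  by_cases hvp : (↑v : ℝ × ℝ) = ↑p
  · have hpu : T.Adj p u := by
      have h : v = p := Subtype.coe_injective hvp
      rw [h] at huv
      exact huv.symm
    rcases hNb u hpu with h | h | h
    · exact absurd h huq
    · exact absurd h hua
    · rw [hvp, h, openSegment_symm ℝ (↑b : ℝ × ℝ) (↑p : ℝ × ℝ)]
      exact pb_disj hsignP
  -- main case: no incidences
  rw [Set.eq_empty_iff_forall_notMem]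
  rintro z ⟨hz1, hz2⟩
  obtain ⟨s, hs0, hs1, hse⟩ := mem_openSegment'.mp hz2
  have e2 : cr (↑p : ℝ × ℝ) z ↑a = (1 - s) * cr (↑p : ℝ × ℝ) ↑q ↑a := by
    rw [hse, ← cr_cyc (↑a : ℝ × ℝ) ↑p _, cr_param, cr_self₃, cr_cyc (↑a : ℝ × ℝ) ↑p ↑q]
    ring
  have e3 : cr (↑p : ℝ × ℝ) ↑q z = s * cr (↑p : ℝ × ℝ) ↑q ↑a := by
    rw [hse, cr_param, cr_self₂]
    ring
  have hX2 : 0 < cr (↑p : ℝ × ℝ) z ↑a * D := by rw [e2, ← hDdef]; nlinarith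
  have hX3 : 0 < cr (↑p : ℝ × ℝ) ↑q z * D := by rw [e3, ← hDdef]; nlinarith
  have hsz : cr (↑q : ℝ × ℝ) ↑a z = 0 := cr_of_mem_openSegment hz2
  obtain ⟨σ, hσ0, hσ1, hσe⟩ := mem_openSegment'.mp hz1
  have hstr : (1 - σ) * cr (↑q : ℝ × ℝ) ↑a ↑u + σ * cr (↑q : ℝ × ℝ) ↑a ↑v = 0 := by
    rw [← cr_param (↑q : ℝ × ℝ) (↑a : ℝ × ℝ) (↑u : ℝ × ℝ) (↑v : ℝ × ℝ) σ, ← hσe]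
    exact hsz
  have hCU : cr (↑q : ℝ × ℝ) ↑a ↑u ≠ 0 :=
    gp_cr hgp q.2 a.2 u.2 hqa (Ne.symm huq) (Ne.symm hua)
  have hCV : cr (↑q : ℝ × ℝ) ↑a ↑v ≠ 0 :=
    gp_cr hgp q.2 a.2 v.2 hqa (Ne.symm hvq) (Ne.symm hva)
  have hUV : cr (↑q : ℝ × ℝ) ↑a ↑u * cr (↑q : ℝ × ℝ) ↑a ↑v < 0 := by
    rcases hCU.lt_or_gt with h1 | h1 <;> rcases hCV.lt_or_gt with h2 | h2 <;> nlinarith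
  obtain ⟨w, w', hw'w, hwp, hwq, hwa, hw'p, hzw, hside⟩ :
      ∃ w w' : P, T.Adj w' w ∧ (↑w : ℝ × ℝ) ≠ ↑p ∧ (↑w : ℝ × ℝ) ≠ ↑q ∧ (↑w : ℝ × ℝ) ≠ ↑a ∧
        (↑w' : ℝ × ℝ) ≠ ↑p ∧ z ∈ openSegment ℝ (↑w' : ℝ × ℝ) ↑w ∧
        0 < cr (↑q : ℝ × ℝ) ↑a ↑w * cr (↑q : ℝ × ℝ) ↑a ↑p := by
    have key2 : (cr (↑q : ℝ × ℝ) ↑a ↑u * cr (↑q : ℝ × ℝ) ↑a ↑p) *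
        (cr (↑q : ℝ × ℝ) ↑a ↑v * cr (↑q : ℝ × ℝ) ↑a ↑p) < 0 := by
      nlinarith [mul_neg_of_neg_of_pos hUV (mul_self_pos.mpr hCP)]
    rcases (mul_ne_zero hCU hCP).lt_or_gt with h | h
    · refine ⟨v, u, huv, hvp, hvq, hva, hup, hz1, ?_⟩
      nlinarith [key2, h]
    · exact ⟨u, v, huv.symm, hup, huq, hua, hvp, by rwa [openSegment_symm], h⟩
  have hw1 : 0 < cr (↑w : ℝ × ℝ) ↑q ↑a * D := by
    have e : cr (↑w : ℝ × ℝ) ↑q ↑a * D = cr (↑q : ℝ × ℝ) ↑a ↑w * cr (↑q : ℝ × ℝ) ↑a ↑p := by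
      rw [hDdef]; unfold cr; ring
    rw [e]; exact hside
  have g1 : ∀ s' : ℝ, cr (z + s' • ((↑w : ℝ × ℝ) - z)) ↑q ↑a
      = (1 - s') * cr z ↑q ↑a + s' * cr (↑w : ℝ × ℝ) ↑q ↑a := by
    intro s'
    rw [cr_cyc _ (↑q : ℝ × ℝ) ↑a, cr_param, ← cr_cyc z (↑q : ℝ × ℝ) ↑a,
      ← cr_cyc (↑w : ℝ × ℝ) (↑q : ℝ × ℝ) ↑a]
  have g2 : ∀ s' : ℝ, cr (↑p : ℝ × ℝ) (z + s' • ((↑w : ℝ × ℝ) - z)) ↑a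
      = (1 - s') * cr (↑p : ℝ × ℝ) z ↑a + s' * cr (↑p : ℝ × ℝ) ↑w ↑a := by
    intro s'
    rw [← cr_cyc (↑a : ℝ × ℝ) ↑p _, cr_param, cr_cyc (↑a : ℝ × ℝ) ↑p z,
      cr_cyc (↑a : ℝ × ℝ) ↑p ↑w]
  have g3 : ∀ s' : ℝ, cr (↑p : ℝ × ℝ) ↑q (z + s' • ((↑w : ℝ × ℝ) - z))
      = (1 - s') * cr (↑p : ℝ × ℝ) ↑q z + s' * cr (↑p : ℝ × ℝ) ↑q ↑w := by
    intro s'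
    rw [cr_param]
  have he1z : cr z ↑q ↑a = 0 := by
    rw [cr_cyc z (↑q : ℝ × ℝ) ↑a]; exact hsz
  have hfin : (cr (↑p : ℝ × ℝ) ↑w ↑a * D < 0 ∨ cr (↑p : ℝ × ℝ) ↑q ↑w * D < 0) → False := by
    intro hneg
    obtain ⟨s', hs'0, hs'1, hvan, hn1, hn2, hn3⟩ :=
      walk_min (X1 := 1) (A1 := 1) one_pos hX2 hX3 (Or.inr hneg)
    set z' : ℝ × ℝ := z + s' • ((↑w : ℝ × ℝ) - z) with hz'def
    have p1 : cr z' ↑q ↑a * D = s' * (cr (↑w : ℝ × ℝ) ↑q ↑a * D) := by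
      rw [hz'def, g1 s', he1z]; ring
    have p2 : cr (↑p : ℝ × ℝ) z' ↑a * D
        = (1 - s') * (cr (↑p : ℝ × ℝ) z ↑a * D) + s' * (cr (↑p : ℝ × ℝ) ↑w ↑a * D) := by
      rw [hz'def, g2 s']; ring
    have p3 : cr (↑p : ℝ × ℝ) ↑q z' * D
        = (1 - s') * (cr (↑p : ℝ × ℝ) ↑q z * D) + s' * (cr (↑p : ℝ × ℝ) ↑q ↑w * D) := by
      rw [hz'def, g3 s']; ring
    have hz'mem : z' ∈ openSegment ℝ (↑w' : ℝ × ℝ) ↑w := open_sub hzw s' hs'0 hs'1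
    have hα : 0 ≤ cr z' ↑q ↑a / D := by
      refine prodsign_div_nonneg hD ?_
      rw [p1]
      nlinarith [hw1]
    rcases hvan with h | h | h
    · linarith
    · have hmid : cr (↑p : ℝ × ℝ) z' ↑a = 0 := (mul_eq_zero.mp (p2.trans h)).resolve_right hD
      have hγ : 0 ≤ cr (↑p : ℝ × ℝ) ↑q z' / D := prodsign_div_nonneg hD (by rw [p3]; exact hn3)
      have hsum' : cr z' ↑q ↑a / D + cr (↑p : ℝ × ℝ) ↑q z' / D = 1 := by
        have hss := cr_sum (↑p : ℝ × ℝ) (↑q : ℝ × ℝ) (↑a : ℝ × ℝ) z'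
        rw [← hDdef] at hss
        field_simp
        linarith [hmid]
      have hb := cr_bary z' hD
      rw [hmid, zero_div, zero_smul, add_zero] at hb
      exact hit_edge hgp hpl hw'w hpa hw'p hwp hz'mem hα hγ hsum' hb
    · have hmid : cr (↑p : ℝ × ℝ) ↑q z' = 0 := (mul_eq_zero.mp (p3.trans h)).resolve_right hD
      have hβ : 0 ≤ cr (↑p : ℝ × ℝ) z' ↑a / D := prodsign_div_nonneg hD (by rw [p2]; exact hn2)
      have hsum' : cr z' ↑q ↑a / D + cr (↑p : ℝ × ℝ) z' ↑a / D = 1 := by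
        have hss := cr_sum (↑p : ℝ × ℝ) (↑q : ℝ × ℝ) (↑a : ℝ × ℝ) z'
        rw [← hDdef] at hss
        field_simp
        linarith [hmid]
      have hb := cr_bary z' hD
      rw [hmid, zero_div, zero_smul, add_zero] at hb
      exact hit_edge hgp hpl hw'w hpq hw'p hwp hz'mem hα hβ hsum' hb
  by_cases hw2 : 0 ≤ cr (↑p : ℝ × ℝ) ↑w ↑a * D
  · by_cases hw3 : 0 ≤ cr (↑p : ℝ × ℝ) ↑q ↑w * D
    · apply hempty w
      have h2ne : cr (↑p : ℝ × ℝ) ↑w ↑a ≠ 0 :=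
        gp_cr hgp p.2 w.2 a.2 (Ne.symm hwp) (adj_coe_ne hpa) hwa
      have h3ne : cr (↑p : ℝ × ℝ) ↑q ↑w ≠ 0 :=
        gp_cr hgp p.2 q.2 w.2 (adj_coe_ne hpq) (Ne.symm hwp) (Ne.symm hwq)
      exact ⟨hw1, lt_of_le_of_ne hw2 (Ne.symm (mul_ne_zero h2ne hD)),
        lt_of_le_of_ne hw3 (Ne.symm (mul_ne_zero h3ne hD))⟩
    · exact hfin (Or.inr (lt_of_not_ge hw3))
  · exact hfin (Or.inl (lt_of_not_ge hw2))

end LinkAdj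

section Assembly

variable {P : Finset (ℝ × ℝ)} {T : SimpleGraph P}

lemma cr_two {x y z : ℝ × ℝ} {β γ : ℝ} (hsum : β + γ = 1) (hz : z = β • x + γ • y) :
    cr z x y = 0 := by
  have hβ : β = 1 - γ := by linarith
  rw [hβ] at hz
  have h1 : z.1 = (1 - γ) * x.1 + γ * y.1 := by
    have := congrArg Prod.fst hz
    simpa [Prod.fst_add, Prod.smul_fst, smul_eq_mul] using this
  have h2 : z.2 = (1 - γ) * x.2 + γ * y.2 := by
    have := congrArg Prod.snd hz
    simpa [Prod.snd_add, Prod.smul_snd, smul_eq_mul] using this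
  unfold cr
  linear_combination (x.2 - y.2) * h1 + (y.1 - x.1) * h2

lemma hull3 {u v w z : ℝ × ℝ} (h : z ∈ convexHull ℝ ({u, v, w} : Set (ℝ × ℝ))) :
    ∃ α β γ : ℝ, 0 ≤ α ∧ 0 ≤ β ∧ 0 ≤ γ ∧ α + β + γ = 1 ∧ z = α • u + β • v + γ • w := by
  rw [convexHull_insert ⟨v, by simp⟩] at h
  obtain ⟨z', hz', hseg⟩ := Set.mem_iUnion₂.mp h
  rw [Set.mem_singleton_iff] at hz'
  subst hz'
  obtain ⟨y, hy, hmem⟩ := Set.mem_iUnion₂.mp hseg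
  rw [convexHull_pair] at hy
  obtain ⟨t, ht0, ht1, rfl⟩ := mem_segment'.mp hy
  obtain ⟨τ, hτ0, hτ1, rfl⟩ := mem_segment'.mp hmem
  refine ⟨1 - τ, τ * (1 - t), τ * t, by linarith, by nlinarith, by nlinarith, by ring, ?_⟩
  module

lemma hull3_strict {u v w z : ℝ × ℝ} (h : z ∈ convexHull ℝ ({u, v, w} : Set (ℝ × ℝ)))
    (h1 : cr z v w ≠ 0) (h2 : cr z u w ≠ 0) (h3 : cr z u v ≠ 0) (hD : cr u v w ≠ 0) :
    InTS u v w z := by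
  obtain ⟨α, β, γ, hα, hβ, hγ, hsum, heq⟩ := hull3 h
  have hα0 : 0 < α := by
    rcases lt_or_eq_of_le hα with h | h
    · exact h
    · exfalso
      apply h1
      exact cr_two (by linarith : β + γ = 1) (by rw [heq, ← h, zero_smul, zero_add])
  have hβ0 : 0 < β := by
    rcases lt_or_eq_of_le hβ with h | h
    · exact h
    · exfalso
      apply h2
      refine cr_two (by linarith : α + γ = 1) ?_
      rw [heq, ← h, zero_smul, add_zero]
  have hγ0 : 0 < γ := by
    rcases lt_or_eq_of_le hγ with h | h
    · exact h
    · exfalso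
      apply h3
      refine cr_two (by linarith : α + β = 1) ?_
      rw [heq, ← h, zero_smul, add_zero]
  exact InTS_of_coeffs hα0 hβ0 hγ0 hD hsum heq

lemma InTS_cyc {u v w z : ℝ × ℝ} (h : InTS u v w z) : InTS v w u z := by
  obtain ⟨h1, h2, h3⟩ := h
  refine ⟨?_, ?_, ?_⟩
  · have e : cr z w u * cr v w u = cr u z w * cr u v w := by unfold cr; ring
    rw [e]; exact h2
  · have e : cr v z u * cr v w u = cr u v z * cr u v w := by unfold cr; ring
    rw [e]; exact h3
  · have e : cr v w z * cr v w u = cr z v w * cr u v w := by unfold cr; ring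
    rw [e]; exact h1

lemma InTS_swap23 {u v w z : ℝ × ℝ} (h : InTS u v w z) : InTS u w v z := by
  obtain ⟨h1, h2, h3⟩ := h
  refine ⟨?_, ?_, ?_⟩
  · have e : cr z w v * cr u w v = cr z v w * cr u v w := by unfold cr; ring
    rw [e]; exact h1
  · have e : cr u z v * cr u w v = cr u v z * cr u v w := by unfold cr; ring
    rw [e]; exact h3
  · have e : cr u w z * cr u w v = cr u z w * cr u v w := by unfold cr; ring
    rw [e]; exact h2

end Assembly

theorem internal_deg3_not_adjacent' (P : Finset (ℝ × ℝ))
    (hgp : GenPos P) (hhull : TriHull P)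
    (T : SimpleGraph P) (hT : IsTriangulation P T)
    (p q : P) (hpq : p ≠ q)
    (hp : Internal P (p : ℝ × ℝ)) (hq : Internal P (q : ℝ × ℝ))
    (hdp : T.degree p = 3) (hdq : T.degree q = 3) :
    ¬ T.Adj p q := by
  intro hadj
  classical
  -- extract the two other neighbors of p
  have hq_mem : q ∈ T.neighborFinset p := (SimpleGraph.mem_neighborFinset T p q).mpr hadj
  have hcard : (T.neighborFinset p).card = 3 := by
    rw [SimpleGraph.card_neighborFinset_eq_degree]; exact hdp
  have h2 : ((T.neighborFinset p).erase q).card = 2 := by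
    rw [Finset.card_erase_of_mem hq_mem, hcard]
  obtain ⟨a, b, hab, habe⟩ := Finset.card_eq_two.mp h2
  have ha_er : a ∈ (T.neighborFinset p).erase q := by rw [habe]; simp
  have hb_er : b ∈ (T.neighborFinset p).erase q := by rw [habe]; simp
  have haq : a ≠ q := (Finset.mem_erase.mp ha_er).1
  have hbq : b ≠ q := (Finset.mem_erase.mp hb_er).1
  have hpa : T.Adj p a := (SimpleGraph.mem_neighborFinset T p a).mp (Finset.mem_of_mem_erase ha_er)
  have hpb : T.Adj p b := (SimpleGraph.mem_neighborFinset T p b).mp (Finset.mem_of_mem_erase hb_er)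
  have hNset : T.neighborFinset p = {q, a, b} := by
    rw [← Finset.insert_erase hq_mem, habe]
  have hNb : ∀ w : P, T.Adj p w → (↑w : ℝ × ℝ) = ↑q ∨ (↑w : ℝ × ℝ) = ↑a ∨ (↑w : ℝ × ℝ) = ↑b := by
    intro w hw
    have hmem : w ∈ T.neighborFinset p := (SimpleGraph.mem_neighborFinset T p w).mpr hw
    rw [hNset] at hmem
    simp only [Finset.mem_insert, Finset.mem_singleton] at hmem
    rcases hmem with h | h | h
    · left; rw [h]
    · right; left; rw [h]
    · right; right; rw [h]
  -- distinctness at the point level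
  have hpq' : (↑p : ℝ × ℝ) ≠ ↑q := adj_coe_ne hadj
  have hpa' : (↑p : ℝ × ℝ) ≠ ↑a := adj_coe_ne hpa
  have hpb' : (↑p : ℝ × ℝ) ≠ ↑b := adj_coe_ne hpb
  have haq' : (↑a : ℝ × ℝ) ≠ ↑q := fun h => haq (Subtype.coe_injective h)
  have hbq' : (↑b : ℝ × ℝ) ≠ ↑q := fun h => hbq (Subtype.coe_injective h)
  have hab' : (↑a : ℝ × ℝ) ≠ ↑b := fun h => hab (Subtype.coe_injective h)
  -- p lies in the convex hull of its neighbors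
  have hhull_p := internal_mem_hull hgp hT p hp.2 q hadj
  have himg_p : Subtype.val '' (T.neighborSet p) = {(↑q : ℝ × ℝ), ↑a, ↑b} := by
    have hset : T.neighborSet p = ↑(T.neighborFinset p) := by
      rw [SimpleGraph.neighborFinset_def, Set.coe_toFinset]
    rw [hset, hNset]
    simp [Set.image_insert_eq]
  rw [himg_p] at hhull_p
  -- p strictly inside triangle q a b
  have hPint : InTS (↑q : ℝ × ℝ) ↑a ↑b ↑p := by
    refine hull3_strict hhull_p ?_ ?_ ?_ ?_
    · exact gp_cr hgp p.2 a.2 b.2 hpa' hpb' hab'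
    · exact gp_cr hgp p.2 q.2 b.2 hpq' hpb' (Ne.symm hbq')
    · exact gp_cr hgp p.2 q.2 a.2 hpq' hpa' (Ne.symm haq')
    · exact gp_cr hgp q.2 a.2 b.2 (Ne.symm haq') (Ne.symm hbq') hab'
  -- the two link edges at q
  have hQA : T.Adj q a := link_adj hgp hT hadj hpa (Ne.symm haq') hNb hPint
  have hNb' : ∀ w : P, T.Adj p w → (↑w : ℝ × ℝ) = ↑q ∨ (↑w : ℝ × ℝ) = ↑b ∨ (↑w : ℝ × ℝ) = ↑a := by
    intro w hw
    rcases hNb w hw with h | h | h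
    · exact Or.inl h
    · exact Or.inr (Or.inr h)
    · exact Or.inr (Or.inl h)
  have hQB : T.Adj q b := link_adj hgp hT hadj hpb (Ne.symm hbq') hNb' (InTS_swap23 hPint)
  -- q's neighborhood is exactly {p, a, b}
  have hqcard : (T.neighborFinset q).card = 3 := by
    rw [SimpleGraph.card_neighborFinset_eq_degree]; exact hdq
  have hsubset : ({p, a, b} : Finset P) ⊆ T.neighborFinset q := by
    intro x hx
    simp only [Finset.mem_insert, Finset.mem_singleton] at hx
    rcases hx with rfl | rfl | rfl
    · exact (SimpleGraph.mem_neighborFinset T q x).mpr hadj.symm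
    · exact (SimpleGraph.mem_neighborFinset T q x).mpr hQA
    · exact (SimpleGraph.mem_neighborFinset T q x).mpr hQB
  have hcard3 : ({p, a, b} : Finset P).card = 3 := by
    rw [Finset.card_insert_of_notMem, Finset.card_insert_of_notMem, Finset.card_singleton]
    · simp only [Finset.mem_singleton]
      exact fun h => hab' (by rw [h])
    · simp only [Finset.mem_insert, Finset.mem_singleton]
      push_neg
      exact ⟨fun h => hpa' (by rw [h]), fun h => hpb' (by rw [h])⟩
  have hNq : T.neighborFinset q = {p, a, b} :=
    (Finset.eq_of_subset_of_card_le hsubset (by rw [hqcard, hcard3])).symm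
  -- q in the hull of its neighbors
  have hhull_q := internal_mem_hull hgp hT q hq.2 p hadj.symm
  have himg_q : Subtype.val '' (T.neighborSet q) = {(↑p : ℝ × ℝ), ↑a, ↑b} := by
    have hset : T.neighborSet q = ↑(T.neighborFinset q) := by
      rw [SimpleGraph.neighborFinset_def, Set.coe_toFinset]
    rw [hset, hNq]
    simp [Set.image_insert_eq]
  rw [himg_q] at hhull_q
  have hQint : InTS (↑p : ℝ × ℝ) ↑a ↑b ↑q := by
    refine hull3_strict hhull_q ?_ ?_ ?_ ?_
    · exact gp_cr hgp q.2 a.2 b.2 (Ne.symm haq') (Ne.symm hbq') hab'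
    · exact gp_cr hgp q.2 p.2 b.2 (Ne.symm hpq') (Ne.symm hbq') hpb'
    · exact gp_cr hgp q.2 p.2 a.2 (Ne.symm hpq') (Ne.symm haq') hpa'
    · exact gp_cr hgp p.2 a.2 b.2 hpa' hpb' hab'
  exact both_int_contra (InTS_cyc hPint) hQint

/-- In a triangulation, two distinct internal vertices of degree 3 cannot be
connected by an edge. -/
theorem internal_deg3_not_adjacent (P : Finset (ℝ × ℝ))
    (hgp : GenPos P) (hhull : TriHull P)
    (T : SimpleGraph P) (hT : IsTriangulation P T)
    (p q : P) (hpq : p ≠ q)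
    (hp : Internal P (p : ℝ × ℝ)) (hq : Internal P (q : ℝ × ℝ))
    (hdp : T.degree p = 3) (hdq : T.degree q = 3) :
    ¬ T.Adj p q :=
  internal_deg3_not_adjacent' P hgp hhull T hT p q hpq hp hq hdp hdq
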